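/- arXiv:math/0411477 — 10 statements merged into one kernel-verified Lean document; each statement's English description precedes it below -/
import Mathlib

section
/- Let q_{ij} be nonzero scalars of Cartan type with Cartan integers a_{ij} chosen maximal. Define m_{ij} := min{ m ∈ ℕ₀ : [m+1]_{q_{ii}} (q_{ii}^m q_{ij} q_{ji} − 1) = 0 }, where [m+1]_q = 1 + q + ... + q^m denotes the q-integer. Then m_{ij} = −a_{ij} for all i ≠ j. -/
/-- Lemma (ii): `m_{ij} = -a_{ij}`, i.e. `(-a i j).toNat` is the least `m ∈ ℕ₀` with
`[m+1]_{q_{ii}} (q_{ii}^m q_{ij} q_{ji} - 1) = 0`. -/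
theorem stmt1 {k : Type*} [Field k] [CharZero k] {n : ℕ}
    (q : Fin n → Fin n → k) (a : Fin n → Fin n → ℤ)
    (hq : ∀ i j, q i j ≠ 0)
    (hdiag : ∀ i, a i i = 2)
    (hoff : ∀ i j, i ≠ j → a i j ≤ 0)
    (hcartan : ∀ i j, q i j * q j i = q i i ^ a i j)
    (hmax : ∀ i j, i ≠ j → ∀ a' : ℤ, a i j < a' → a' ≤ 0 → q i j * q j i ≠ q i i ^ a')
    (i j : Fin n) (hij : i ≠ j) :
    IsLeast {m : ℕ |
        (∑ l ∈ Finset.range (m + 1), q i i ^ l) * (q i i ^ m * q i j * q j i - 1) = 0}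
      (-a i j).toNat := by
  have hqi : q i i ≠ 0 := hq i i
  set N := (-a i j).toNat with hN
  have haN : a i j = -(N : ℤ) := by
    have h0 := hoff i j hij
    omega
  constructor
  · show (∑ l ∈ Finset.range (N + 1), q i i ^ l) * (q i i ^ N * q i j * q j i - 1) = 0
    have hfac : q i i ^ N * q i j * q j i - 1 = 0 := by
      rw [mul_assoc, hcartan, haN, ← zpow_natCast (q i i) N, ← zpow_add₀ hqi]
      simp
    rw [hfac, mul_zero]
  · intro m hm
    by_contra hlt
    push_neg at hlt
    rcases mul_eq_zero.mp hm with hs | hf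
    · have hne1 : q i i ≠ 1 := by
        intro h1
        rw [h1] at hs
        simp at hs
        exact Nat.cast_add_one_ne_zero m hs
      have hpow : q i i ^ (m + 1) = 1 := by
        have hg := geom_sum_mul (q i i) (m + 1)
        rw [hs, zero_mul] at hg
        exact sub_eq_zero.mp hg.symm
      exact hmax i j hij (-(N : ℤ) + (m + 1)) (by omega) (by omega)
        (by
          rw [hcartan, haN, zpow_add₀ hqi,
            show ((m : ℤ) + 1) = ((m + 1 : ℕ) : ℤ) by push_cast; ring,
            zpow_natCast, hpow, mul_one])
    · have hone : q i i ^ m * (q i j * q j i) = 1 := by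
        rw [← mul_assoc]
        exact sub_eq_zero.mp hf
      have hqq : q i j * q j i = q i i ^ (-(m : ℤ)) := by
        rw [zpow_neg, zpow_natCast]
        exact eq_inv_of_mul_eq_one_left (by rw [mul_comm]; exact hone)
      exact hmax i j hij (-(m : ℤ)) (by omega) (by omega) hqq
end

section
/- Let a_{12},a_{13},a_{21},a_{23},a_{31},a_{32} be integers ≤ −1 with a_{12} ≤ −2, and let t_1, t_2, t_3 be the reflection matrices as follows: t_1 has rows (−1, −a_{12}, −a_{13}), (0,1,0), (0,0,1); t_2 has rows (1,0,0), (−a_{21}, −1, −a_{23}), (0,0,1); t_3 has rows (1,0,0), (0,1,0), (−a_{31}, −a_{32}, −1). Then the matrix t_1 t_2 t_3 does not have finite multiplicative order. -/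
/-- For a non-simply-laced 3-cycle Cartan diagram, the product of the three
reflection matrices does not have finite multiplicative order. -/
theorem stmt8 (a12 a13 a21 a23 a31 a32 : ℤ)
    (h12 : a12 ≤ -2) (h13 : a13 ≤ -1) (h21 : a21 ≤ -1)
    (h23 : a23 ≤ -1) (h31 : a31 ≤ -1) (h32 : a32 ≤ -1) :
    ¬ ∃ m : ℕ, 1 ≤ m ∧
      ((!![(-1 : ℤ), -a12, -a13; 0, 1, 0; 0, 0, 1]) *
       (!![(1 : ℤ), 0, 0; -a21, -1, -a23; 0, 0, 1]) *
       (!![(1 : ℤ), 0, 0; 0, 1, 0; -a31, -a32, -1])) ^ m = 1 := by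
  rintro ⟨m, hm, hA⟩
  set t1 : Matrix (Fin 3) (Fin 3) ℤ := !![(-1 : ℤ), -a12, -a13; 0, 1, 0; 0, 0, 1] with ht1
  set t2 : Matrix (Fin 3) (Fin 3) ℤ := !![(1 : ℤ), 0, 0; -a21, -1, -a23; 0, 0, 1] with ht2
  set t3 : Matrix (Fin 3) (Fin 3) ℤ := !![(1 : ℤ), 0, 0; 0, 1, 0; -a31, -a32, -1] with ht3
  set A : Matrix (Fin 3) (Fin 3) ℤ := t1 * t2 * t3 with hAdef
  -- the key step: the cone {1 ≤ z, z ≤ y, 2y ≤ x} is mapped into itself by A,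
  -- with the last coordinate strictly increasing.
  have step : ∀ w : Fin 3 → ℤ, 1 ≤ w 2 → w 2 ≤ w 1 → 2 * w 1 ≤ w 0 →
      (1 ≤ (A.mulVec w) 2 ∧ (A.mulVec w) 2 ≤ (A.mulVec w) 1 ∧
        2 * (A.mulVec w) 1 ≤ (A.mulVec w) 0) ∧ w 2 + 1 ≤ (A.mulVec w) 2 := by
    intro w hz hzy hyx
    set x := w 0 with hx
    set y := w 1 with hy
    set z := w 2 with hzdef
    -- explicit formulas for the coordinates of A.mulVec w
    have e2 : (A.mulVec w) 2 = -a31 * x + -a32 * y + -z := by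
      simp [hAdef, ht1, ht2, ht3, Matrix.mulVec, dotProduct,
        Fin.sum_univ_three, Matrix.mul_apply]
      try ring
    have e1 : (A.mulVec w) 1 = -a21 * x + -y + -a23 * ((A.mulVec w) 2) := by
      rw [e2]
      simp [hAdef, ht1, ht2, ht3, Matrix.mulVec, dotProduct,
        Fin.sum_univ_three, Matrix.mul_apply]
      try ring
    have e0 : (A.mulVec w) 0 = -x + -a12 * ((A.mulVec w) 1) + -a13 * ((A.mulVec w) 2) := by
      rw [e1, e2]
      simp [hAdef, ht1, ht2, ht3, Matrix.mulVec, dotProduct,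
        Fin.sum_univ_three, Matrix.mul_apply]
      try ring
    -- basic positivity
    have hy1 : 1 ≤ y := le_trans hz hzy
    have hx2 : 2 ≤ x := by linarith
    have hb31 : 0 ≤ -a31 - 1 := by linarith
    have hb32 : 0 ≤ -a32 - 1 := by linarith
    have hb21 : 0 ≤ -a21 - 1 := by linarith
    have hb23 : 0 ≤ -a23 - 1 := by linarith
    have hb12 : 0 ≤ -a12 - 2 := by linarith
    have hb13 : 0 ≤ -a13 - 1 := by linarith
    -- lower bound for the last coordinate
    have h2lb : x + y - z ≤ (A.mulVec w) 2 := by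
      rw [e2]
      nlinarith [mul_nonneg hb31 (by linarith : (0:ℤ) ≤ x),
        mul_nonneg hb32 (by linarith : (0:ℤ) ≤ y)]
    have h2pos : 2 * z ≤ (A.mulVec w) 2 := by linarith
    have h2x : x ≤ (A.mulVec w) 2 := by linarith
    -- lower bound for the middle coordinate
    have h1lb : x - y + (A.mulVec w) 2 ≤ (A.mulVec w) 1 := by
      rw [e1]
      nlinarith [mul_nonneg hb21 (by linarith : (0:ℤ) ≤ x),
        mul_nonneg hb23 (by linarith : (0:ℤ) ≤ (A.mulVec w) 2)]
    -- lower bound for the first coordinate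
    have h0lb : -x + 2 * ((A.mulVec w) 1) + (A.mulVec w) 2 ≤ (A.mulVec w) 0 := by
      rw [e0]
      nlinarith [mul_nonneg hb12 (by linarith : (0:ℤ) ≤ (A.mulVec w) 1),
        mul_nonneg hb13 (by linarith : (0:ℤ) ≤ (A.mulVec w) 2)]
    refine ⟨⟨by linarith, by linarith, by linarith⟩, by linarith⟩
  -- iterate
  set v : Fin 3 → ℤ := ![2, 1, 1] with hv
  have hv0 : v 0 = 2 := rfl
  have hv1 : v 1 = 1 := rfl
  have hv2 : v 2 = 1 := rfl
  have iter : ∀ k : ℕ, (1 ≤ ((A ^ k).mulVec v) 2 ∧ ((A ^ k).mulVec v) 2 ≤ ((A ^ k).mulVec v) 1 ∧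
      2 * ((A ^ k).mulVec v) 1 ≤ ((A ^ k).mulVec v) 0) ∧ (k : ℤ) + 1 ≤ ((A ^ k).mulVec v) 2 := by
    intro k
    induction k with
    | zero =>
      simp [Matrix.one_mulVec, hv0, hv1, hv2]
    | succ n ih =>
      obtain ⟨⟨hz, hzy, hyx⟩, hgrow⟩ := ih
      have hpow : (A ^ (n + 1)).mulVec v = A.mulVec ((A ^ n).mulVec v) := by
        rw [Matrix.mulVec_mulVec, ← pow_succ']
      obtain ⟨hinv, hg⟩ := step ((A ^ n).mulVec v) hz hzy hyx
      rw [hpow]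
      push_cast
      exact ⟨hinv, by linarith⟩
  have h1 := (iter m).2
  rw [hA, Matrix.one_mulVec, hv2] at h1
  have : (1 : ℤ) ≤ (m : ℤ) := by exact_mod_cast hm
  linarith
end

section
/- Let C be the 4×4 generalized Cartan matrix with rows (2,−2,0,−1), (−1,2,−1,0), (0,−1,2,−2), (−1,0,−1,2), and let t_1,t_2,t_3,t_4 be the associated pseudo-reflection matrices, where t_i is the identity except in row i, whose entries are −C_{ij} for j ≠ i and −1 at position (i,i). Then t_1 t_2 t_3 t_4 equals the matrix with rows (6,0,3,−5), (3,0,1,−2), (2,1,1,−2), (1,0,1,−1), which has trace 6 and does not have finite multiplicative order. -/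
open Matrix

private def Areal : Matrix (Fin 4) (Fin 4) ℝ :=
  !![(6 : ℝ), 0, 3, -5; 3, 0, 1, -2; 2, 1, 1, -2; 1, 0, 1, -1]

private lemma no_fin_order :
    ¬ ∃ m : ℕ, 1 ≤ m ∧
      (!![(6 : ℤ), 0, 3, -5; 3, 0, 1, -2; 2, 1, 1, -2; 1, 0, 1, -1]) ^ m = 1 := by
  rintro ⟨m, hm, hpow⟩
  have hAreal : ((Int.castRingHom ℝ).mapMatrix
      (!![(6 : ℤ), 0, 3, -5; 3, 0, 1, -2; 2, 1, 1, -2; 1, 0, 1, -1])) = Areal := by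
    ext i j
    fin_cases i <;> fin_cases j <;>
      simp [Areal, Matrix.one_apply, Matrix.vecHead, Matrix.vecTail]
  have hApow : Areal ^ m = 1 := by
    rw [← hAreal, ← map_pow, hpow, _root_.map_one]
  obtain ⟨l, hl_mem, hl⟩ : ∃ l ∈ Set.Icc (6 : ℝ) 7,
      l ^ 4 - 6 * l ^ 3 - l ^ 2 - 3 * l + 1 = 0 := by
    have hcont : ContinuousOn (fun x : ℝ => x ^ 4 - 6 * x ^ 3 - x ^ 2 - 3 * x + 1)
        (Set.Icc 6 7) := by fun_prop
    have h0 : (0 : ℝ) ∈ Set.Icc ((6:ℝ)^4 - 6*6^3 - 6^2 - 3*6 + 1)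
        ((7:ℝ)^4 - 6*7^3 - 7^2 - 3*7 + 1) := by norm_num
    obtain ⟨l, hl1, hl2⟩ := intermediate_value_Icc (by norm_num : (6:ℝ) ≤ 7) hcont h0
    exact ⟨l, hl1, hl2⟩
  have hl6 : (6 : ℝ) ≤ l := hl_mem.1
  have hdet : (Areal - l • 1).det = 0 := by
    have hsub : Areal - l • 1 =
        !![6 - l, 0, 3, -5; 3, -l, 1, -2; 2, 1, 1 - l, -2; 1, 0, 1, -1 - l] := by
      ext i j
      fin_cases i <;> fin_cases j <;>
        simp [Areal, Matrix.one_apply, Matrix.vecHead, Matrix.vecTail]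
    have h : (Areal - l • 1).det = l ^ 4 - 6 * l ^ 3 - l ^ 2 - 3 * l + 1 := by
      rw [hsub]
      simp (config := { decide := true }) [Matrix.det_succ_row_zero, Fin.sum_univ_succ, Fin.succAbove,
        Matrix.vecHead, Matrix.vecTail, show Fin.castSucc (2 : Fin 3) = (2 : Fin 4) from rfl]
      ring
    rw [h, hl]
  obtain ⟨v, hv0, hv⟩ := (Matrix.exists_mulVec_eq_zero_iff).2 hdet
  have heig : Areal *ᵥ v = l • v := by
    rw [Matrix.sub_mulVec, sub_eq_zero] at hv
    rw [hv, Matrix.smul_mulVec, Matrix.one_mulVec]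
  have hpoweig : ∀ k : ℕ, (Areal ^ k) *ᵥ v = l ^ k • v := by
    intro k
    induction k with
    | zero => simp
    | succ n ih =>
      rw [pow_succ', ← Matrix.mulVec_mulVec, ih, Matrix.mulVec_smul, heig,
        smul_smul, pow_succ']
      ring_nf
  have h1 : v = l ^ m • v := by
    have := hpoweig m
    rwa [hApow, Matrix.one_mulVec] at this
  have hlm : l ^ m = 1 := by
    by_contra h
    apply hv0
    have : (l ^ m - 1) • v = 0 := by
      rw [sub_smul, one_smul, ← h1, sub_self]
    exact (smul_eq_zero.mp this).resolve_left (sub_ne_zero.mpr h) |>.symm ▸ by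
      simpa using (smul_eq_zero.mp this).resolve_left (sub_ne_zero.mpr h)
  have : (6 : ℝ) ^ m ≤ l ^ m := pow_le_pow_left₀ (by norm_num) hl6 m
  have h6 : (6 : ℝ) ^ 1 ≤ 6 ^ m := pow_le_pow_right₀ (by norm_num) hm
  linarith [hlm ▸ this, h6]

set_option maxHeartbeats 1000000 in
private lemma prod_eq :
    (!![(-1 : ℤ), 2, 0, 1; 0, 1, 0, 0; 0, 0, 1, 0; 0, 0, 0, 1]) *
    (!![(1 : ℤ), 0, 0, 0; 1, -1, 1, 0; 0, 0, 1, 0; 0, 0, 0, 1]) *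
    (!![(1 : ℤ), 0, 0, 0; 0, 1, 0, 0; 0, 1, -1, 2; 0, 0, 0, 1]) *
    (!![(1 : ℤ), 0, 0, 0; 0, 1, 0, 0; 0, 0, 1, 0; 1, 0, 1, -1]) =
      !![(6 : ℤ), 0, 3, -5; 3, 0, 1, -2; 2, 1, 1, -2; 1, 0, 1, -1] := by
  ext i j
  fin_cases i <;> fin_cases j <;>
    simp [Matrix.mul_apply, Fin.sum_univ_four, Matrix.vecHead, Matrix.vecTail]

/-- For the 4×4 Cartan matrix with rows `(2,-2,0,-1), (-1,2,-1,0), (0,-1,2,-2),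
(-1,0,-1,2)`, the product `t₁t₂t₃t₄` of the associated pseudo-reflection matrices
equals the given matrix, has trace `6`, and does not have finite multiplicative
order. -/
theorem stmt9 :
    (!![(-1 : ℤ), 2, 0, 1; 0, 1, 0, 0; 0, 0, 1, 0; 0, 0, 0, 1]) *
    (!![(1 : ℤ), 0, 0, 0; 1, -1, 1, 0; 0, 0, 1, 0; 0, 0, 0, 1]) *
    (!![(1 : ℤ), 0, 0, 0; 0, 1, 0, 0; 0, 1, -1, 2; 0, 0, 0, 1]) *
    (!![(1 : ℤ), 0, 0, 0; 0, 1, 0, 0; 0, 0, 1, 0; 1, 0, 1, -1]) =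
      !![(6 : ℤ), 0, 3, -5; 3, 0, 1, -2; 2, 1, 1, -2; 1, 0, 1, -1] ∧
    Matrix.trace (!![(6 : ℤ), 0, 3, -5; 3, 0, 1, -2; 2, 1, 1, -2; 1, 0, 1, -1]) = 6 ∧
    ¬ ∃ m : ℕ, 1 ≤ m ∧
      (!![(6 : ℤ), 0, 3, -5; 3, 0, 1, -2; 2, 1, 1, -2; 1, 0, 1, -1]) ^ m = 1 := by
  refine ⟨prod_eq, ?_, no_fin_order⟩
  simp [Matrix.trace, Fin.sum_univ_four, Matrix.diag, Matrix.vecHead, Matrix.vecTail]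
end

section
/- There do not exist nonzero scalars q_{ij} (1 ≤ i,j ≤ 5) in a field of characteristic zero that are of Cartan type (with maximal Cartan integers) realizing the 5×5 Cartan matrix with rows (2,−2,0,0,−1), (−1,2,−1,0,0), (0,−1,2,−1,0), (0,0,−1,2,−1), (−1,0,0,−1,2). Indeed, the Cartan-type relations force q_{11}² = q_{22} = q_{33} = q_{44} = q_{55} = q_{11}, hence q_{12}q_{21} = q_{11} = 1, contradicting maximality of a_{12} = −2. -/
/-- The 5×5 Cartan matrix from the paper (a 5-cycle). -/
def cycleC5 : Matrix (Fin 5) (Fin 5) ℤ :=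
  !![2, -2, 0, 0, -1;
     -1, 2, -1, 0, 0;
     0, -1, 2, -1, 0;
     0, 0, -1, 2, -1;
     -1, 0, 0, -1, 2]

/-- There are no nonzero scalars `q i j` of Cartan type (with maximal Cartan
integers) realizing the 5×5 cycle Cartan matrix `cycleC5`. -/
theorem stmt10 {k : Type*} [Field k] [CharZero k] :
    ¬ ∃ q : Fin 5 → Fin 5 → k,
      (∀ i j, q i j ≠ 0) ∧
      (∀ i j, q i j * q j i = q i i ^ cycleC5 i j) ∧
      (∀ i j, i ≠ j → ∀ a' : ℤ, cycleC5 i j < a' → a' ≤ 0 →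
        q i j * q j i ≠ q i i ^ a') := by
  rintro ⟨q, hne, hrel, hmax⟩
  have h01 := hrel 0 1
  have h10 := hrel 1 0
  have h12 := hrel 1 2
  have h21 := hrel 2 1
  have h23 := hrel 2 3
  have h32 := hrel 3 2
  have h34 := hrel 3 4
  have h43 := hrel 4 3
  have h40 := hrel 4 0
  have h04 := hrel 0 4
  rw [(by decide : cycleC5 0 1 = -2)] at h01
  rw [(by decide : cycleC5 1 0 = -1)] at h10
  rw [(by decide : cycleC5 1 2 = -1)] at h12
  rw [(by decide : cycleC5 2 1 = -1)] at h21
  rw [(by decide : cycleC5 2 3 = -1)] at h23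
  rw [(by decide : cycleC5 3 2 = -1)] at h32
  rw [(by decide : cycleC5 3 4 = -1)] at h34
  rw [(by decide : cycleC5 4 3 = -1)] at h43
  rw [(by decide : cycleC5 4 0 = -1)] at h40
  rw [(by decide : cycleC5 0 4 = -1)] at h04
  -- chain
  have e1 : q 0 0 ^ (2 : ℤ) = q 1 1 := by
    apply inv_injective
    rw [← zpow_neg, ← zpow_neg_one, ← h01, ← h10]
    exact mul_comm _ _
  have e2 : q 1 1 = q 2 2 := by
    apply inv_injective
    rw [← zpow_neg_one, ← zpow_neg_one, ← h12, ← h21]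
    exact mul_comm _ _
  have e3 : q 2 2 = q 3 3 := by
    apply inv_injective
    rw [← zpow_neg_one, ← zpow_neg_one, ← h23, ← h32]
    exact mul_comm _ _
  have e4 : q 3 3 = q 4 4 := by
    apply inv_injective
    rw [← zpow_neg_one, ← zpow_neg_one, ← h34, ← h43]
    exact mul_comm _ _
  have e5 : q 4 4 = q 0 0 := by
    apply inv_injective
    rw [← zpow_neg_one, ← zpow_neg_one, ← h40, ← h04]
    exact mul_comm _ _
  have hsq : q 0 0 ^ (2 : ℤ) = q 0 0 := by
    rw [e1, e2, e3, e4, e5]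
  have h00 : q 0 0 = 1 := by
    have hne0 := hne 0 0
    have : q 0 0 * q 0 0 = q 0 0 := by
      have := hsq
      rwa [show (2 : ℤ) = 1 + 1 by norm_num, zpow_add₀ hne0, zpow_one] at this
    field_simp at this
    exact this
  have := hmax 0 1 (by decide) 0 (by decide) (by decide)
  apply this
  rw [h01, h00]
  simp
end

section
/- Let q_{ij} (1 ≤ i,j ≤ n) be of Cartan type with Cartan matrix (a_{jm}). Fix i and define new scalars q(i)_{jm} by: q(i)_{ii} = q_{ii}; q(i)_{im} = q_{mi} for m ≠ i; q(i)_{ji} = q_{ij} for j ≠ i; and q(i)_{jm} = q_{ij}^{a_{im}} q_{im}^{−a_{ij}} q_{jm} for j,m ≠ i. Then q(i)_{jj} = q_{jj} and q(i)_{jm} q(i)_{mj} = q(i)_{jj}^{a_{jm}} for all j,m, so the transformed braiding is of the same Cartan type. -/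
/-- The structure constants of the braiding of the transformed Yetter–Drinfeld
module `V_i`. -/
def qTrans {k : Type*} [Field k] {n : ℕ} (q : Fin n → Fin n → k)
    (a : Fin n → Fin n → ℤ) (i : Fin n) : Fin n → Fin n → k :=
  fun j m =>
    if j = i then (if m = i then q i i else q m i)
    else if m = i then q i j
    else q i j ^ a i m * q i m ^ (-(a i j)) * q j m

/-- The transformed braiding is of the same Cartan type: `q(i)_{jj} = q_{jj}` and
`q(i)_{jm} q(i)_{mj} = q(i)_{jj}^{a_{jm}}` for all `j, m`. -/
theorem stmt11 {k : Type*} [Field k] [CharZero k] {n : ℕ}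
    (q : Fin n → Fin n → k) (a : Fin n → Fin n → ℤ)
    (hq : ∀ i j, q i j ≠ 0)
    (hdiag : ∀ i, a i i = 2)
    (hoff : ∀ i j, i ≠ j → a i j ≤ 0)
    (hcartan : ∀ i j, q i j * q j i = q i i ^ a i j)
    (i : Fin n) :
    ∀ j m : Fin n,
      qTrans q a i j j = q j j ∧
      qTrans q a i j m * qTrans q a i m j = qTrans q a i j j ^ a j m := by
  have hdiagT : ∀ j, qTrans q a i j j = q j j := by
    intro j
    by_cases hj : j = i
    · simp [qTrans, hj]
    · simp only [qTrans, if_neg hj]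
      rw [← zpow_add₀ (hq i j), add_neg_cancel, zpow_zero, one_mul]
  intro j m
  refine ⟨hdiagT j, ?_⟩
  rw [hdiagT j]
  by_cases hj : j = i
  · by_cases hm : m = i
    · rw [hj, hm]
      simp only [qTrans, if_pos rfl, if_true, eq_self_iff_true]
      rw [hdiag, zpow_two]
    · rw [hj]
      simp only [qTrans, if_pos rfl, if_neg hm, if_true, eq_self_iff_true]
      rw [mul_comm, hcartan]
  · by_cases hm : m = i
    · rw [hm]
      simp only [qTrans, if_neg hj, if_pos rfl, if_true, eq_self_iff_true]
      rw [mul_comm, hcartan]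
    · simp only [qTrans, if_neg hj, if_neg hm]
      have h1 : q i j ^ a i m * q i j ^ (-(a i m)) = 1 := by
        rw [← zpow_add₀ (hq i j), add_neg_cancel, zpow_zero]
      have h2 : q i m ^ (-(a i j)) * q i m ^ a i j = 1 := by
        rw [← zpow_add₀ (hq i m), neg_add_cancel, zpow_zero]
      calc q i j ^ a i m * q i m ^ (-(a i j)) * q j m *
            (q i m ^ a i j * q i j ^ (-(a i m)) * q m j)
          = (q i j ^ a i m * q i j ^ (-(a i m))) *
            ((q i m ^ (-(a i j)) * q i m ^ a i j) * (q j m * q m j)) := by ring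
        _ = q j m * q m j := by rw [h1, h2, one_mul, one_mul]
        _ = q j j ^ a j m := hcartan j m
end

section
/- Let W be the Weyl group of a symmetrizable generalized Cartan matrix C, acting on ℤⁿ via the simple reflections s_i(e_j) = e_j − a_{ij} e_i (and s_i(e_i) = −e_i). If the orbit of every element of ℤⁿ under W is finite and W itself is finite, then C is of finite type. Conversely, if C is of finite type then W is finite. -/
/-- The matrix of the simple reflection `s_i` of a generalized Cartan matrix `a`. -/
def cartanRefl {n : ℕ} (a : Fin n → Fin n → ℤ) (i : Fin n) :
    Matrix (Fin n) (Fin n) ℤ :=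
  Matrix.of fun l j => (if l = j then 1 else 0) - (if l = i then a i j else 0)

/-- The Weyl group of `a`, realized as the subgroup of `GL_n(ℤ)` generated by the
simple reflections. -/
def weylGroup {n : ℕ} (a : Fin n → Fin n → ℤ) :
    Subgroup (Matrix.GeneralLinearGroup (Fin n) ℤ) :=
  Subgroup.closure {g | ∃ i, (g : Matrix (Fin n) (Fin n) ℤ) = cartanRefl a i}

/-- The root system of `a`: the orbit of the simple roots (standard basis vectors)
under the Weyl group. -/
def rootSys {n : ℕ} (a : Fin n → Fin n → ℤ) : Set (Fin n → ℤ) :=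
  {v | ∃ w ∈ weylGroup a, ∃ i : Fin n,
    v = (w : Matrix (Fin n) (Fin n) ℤ).mulVec (Pi.single i 1)}

/-!
If `W` is finite, averaging the standard form over `W` gives a `W`-invariant positive definite
form `P`. Invariance under `s_i`, which sends `e_i ↦ -e_i` and `e_j ↦ e_j - a_ij e_i`, gives
`a_ij P_ii = 2 P_ij`, so `DA = QP` with `Q = diag(2 d_i / P_ii)`. Since `DA` and `P` are
symmetric, `Q` commutes with `P`, and then `DA = Q^{1/2} P Q^{1/2}` is positive definite.

Conversely, `W` preserves the form `DA`. If `DA` is positive definite, every column `w e_j` of an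
element `w ∈ W` is an integer vector of `DA`-length `(DA)_jj`; by Cauchy-Schwarz there are only
finitely many such vectors, hence only finitely many `w`.
-/

open Matrix

theorem Int.finite_setOf_cast_sq_le {K : Type*} [Ring K] [LinearOrder K] [IsStrictOrderedRing K]
    [FloorRing K] (c : K) : {m : ℤ | (m : K) ^ 2 ≤ c}.Finite := by
  refine (Set.finite_Icc (-⌈c⌉) ⌈c⌉).subset fun m (hm : _ ≤ c) => ?_
  rw [Set.mem_Icc, ← abs_le, ← Int.cast_le (R := K), Int.cast_abs]
  calc |(m : K)| ≤ (m : K) ^ 2 := by exact_mod_cast Int.natAbs_le_self_sq m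
    _ ≤ c := hm
    _ ≤ ⌈c⌉ := Int.le_ceil c

namespace Matrix

variable {ι K : Type*} [Fintype ι] [DecidableEq ι]

section CommRing

variable [CommRing K]

omit [DecidableEq ι] in
theorem mulVec_dotProduct_mulVec_mulVec (M B : Matrix ι ι K) (x y : ι → K) :
    (M *ᵥ x) ⬝ᵥ B *ᵥ (M *ᵥ y) = x ⬝ᵥ (Mᵀ * B * M) *ᵥ y := by
  rw [← mulVec_mulVec, ← mulVec_mulVec, dotProduct_mulVec x, vecMul_transpose,
    dotProduct_mulVec, dotProduct_mulVec]

theorem single_dotProduct_mulVec_single (M : Matrix ι ι K) (i j : ι) :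
    Pi.single i 1 ⬝ᵥ M *ᵥ Pi.single j 1 = M i j := by
  rw [← toBilin'_apply', toBilin'_single]

def isometryGroup (B : Matrix ι ι K) : Subgroup (GL ι K) where
  carrier := {g | (g : Matrix ι ι K)ᵀ * B * g = B}
  one_mem' := by simp
  mul_mem' {g h} (hg : _ = B) (hh : _ = B) := by
    change _ = B
    calc ((g * h : GL ι K) : Matrix ι ι K)ᵀ * B * ↑(g * h)
        = (h : Matrix ι ι K)ᵀ * ((g : Matrix ι ι K)ᵀ * B * g) * h := by
          simp only [Units.val_mul, transpose_mul, Matrix.mul_assoc]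
      _ = B := by rw [hg, hh]
  inv_mem' {g} (hg : _ = B) := by
    change _ = B
    calc ((g⁻¹ : GL ι K) : Matrix ι ι K)ᵀ * B * ↑g⁻¹
        = ((g : Matrix ι ι K) * ↑g⁻¹)ᵀ * B * ((g : Matrix ι ι K) * ↑g⁻¹) := by
          conv_lhs => rw [← hg]
          simp only [transpose_mul, Matrix.mul_assoc]
      _ = B := by simp

theorem mem_isometryGroup {B : Matrix ι ι K} {g : GL ι K} :
    g ∈ isometryGroup B ↔ (g : Matrix ι ι K)ᵀ * B * g = B := Iff.rfl

end CommRing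

theorem exists_posDef_le_isometryGroup [Field K] [PartialOrder K] [StarRing K]
    [StarOrderedRing K] [TrivialStar K] (G : Subgroup (GL ι K)) [Finite G] :
    ∃ P : Matrix ι ι K, P.PosDef ∧ G ≤ isometryGroup P := by
  have := Fintype.ofFinite G
  refine ⟨∑ g : G, ((g : GL ι K) : Matrix ι ι K)ᵀ * (g : GL ι K), ?_, fun h hh => ?_⟩
  · refine posDef_sum Finset.univ_nonempty fun g _ => ?_
    rw [← conjTranspose_eq_transpose_of_trivial]
    exact .conjTranspose_mul_self _ (mulVec_injective_iff_isUnit.mpr (Units.isUnit _))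
  · rw [mem_isometryGroup, Finset.mul_sum, Finset.sum_mul]
    refine Fintype.sum_equiv (Equiv.mulRight ⟨h, hh⟩) _ _ fun g => ?_
    simp [transpose_mul, Matrix.mul_assoc]

section FloorRing

variable [Field K] [LinearOrder K] [IsStrictOrderedRing K] [FloorRing K] [StarRing K]
  [TrivialStar K]

theorem PosDef.finite_setOf_dotProduct_mulVec_le {B : Matrix ι ι K} (hB : B.PosDef) (c : K) :
    {x : ι → ℤ | ((↑) ∘ x : ι → K) ⬝ᵥ B *ᵥ ((↑) ∘ x) ≤ c}.Finite := by
  set β := toBilin' B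
  have hβ_symm : LinearMap.IsSymm β := LinearMap.BilinForm.isSymm_iff.mp
    (isSymm_toBilin'_iff_isSymm.mpr (isHermitian_iff_isSymm.mp hB.isHermitian))
  have hβ_nonneg (y : ι → K) : 0 ≤ β y y := by
    simpa [β, toBilin'_apply'] using hB.posSemidef.dotProduct_mulVec_nonneg y
  -- With `B *ᵥ u i = Pi.single i 1` we have `x i = β x (u i)`, and Cauchy-Schwarz applies.
  choose u hu using fun i => mulVec_surjective_iff_isUnit.mpr hB.isUnit (Pi.single i 1)
  refine (Set.Finite.pi fun i => Int.finite_setOf_cast_sq_le (c * β (u i) (u i))).subset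
    fun x (hx : _ ≤ c) => Set.mem_univ_pi.mpr fun i => ?_
  have hxi : (x i : K) = β ((↑) ∘ x) (u i) := by
    rw [toBilin'_apply', hu, dotProduct_single, mul_one, Function.comp_apply]
  calc (x i : K) ^ 2 = β ((↑) ∘ x) (u i) ^ 2 := by rw [hxi]
    _ ≤ β ((↑) ∘ x) ((↑) ∘ x) * β (u i) (u i) :=
      β.apply_sq_le_of_symm hβ_nonneg hβ_symm _ _
    _ ≤ c * β (u i) (u i) := mul_le_mul_of_nonneg_right (by rwa [toBilin'_apply']) (hβ_nonneg _)

theorem PosDef.finite_setOf_transpose_map_mul_mul_eq {B : Matrix ι ι K} (hB : B.PosDef) :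
    {M : Matrix ι ι ℤ | (M.map ((↑) : ℤ → K))ᵀ * B * M.map (↑) = B}.Finite := by
  refine ((Set.Finite.pi fun j => hB.finite_setOf_dotProduct_mulVec_le (B j j)).preimage
    transpose_injective.injOn).subset fun M (hM : _ = B) => Set.mem_univ_pi.mpr fun j => ?_
  have hcol : ((↑) ∘ Mᵀ j : ι → K) = M.map (↑) *ᵥ Pi.single j 1 := by
    ext k
    simp
  change _ ≤ _
  rw [hcol, mulVec_dotProduct_mulVec_mulVec, hM, single_dotProduct_mulVec_single]

end FloorRing

theorem PosDef.diagonal_mul_of_commute {P : Matrix ι ι ℝ} (hP : P.PosDef) {q : ι → ℝ}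
    (hq : ∀ i, 0 < q i) (hc : Commute (diagonal q) P) : (diagonal q * P).PosDef := by
  set S := diagonal fun i => √(q i)
  have hS : IsUnit S := isUnit_diagonal.mpr <| Pi.isUnit_iff.mpr fun i =>
    (Real.sqrt_pos.mpr (hq i)).ne'.isUnit
  -- `q` is constant along the nonzero entries of `P`, so the square roots recombine.
  have hSPS : diagonal q * P = Sᴴ * P * S := by
    ext i j
    have hij := congr_fun (congr_fun hc i) j
    simp only [diagonal_mul, mul_diagonal] at hij
    simp only [S, diagonal_conjTranspose, star_trivial, diagonal_mul, mul_diagonal]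
    rcases eq_or_ne (P i j) 0 with h | h
    · simp [h]
    · rw [← mul_right_cancel₀ h (hij.trans (mul_comm _ _))]
      linear_combination -P i j * Real.mul_self_sqrt (hq i).le
  rw [hSPS]
  exact hP.conjTranspose_mul_mul_same (mulVec_injective_iff_isUnit.mpr hS)

end Matrix

namespace CartanMatrix

variable {n : ℕ} {K : Type*} (a : Fin n → Fin n → ℤ)

def form [Ring K] (d : Fin n → K) : Matrix (Fin n) (Fin n) K :=
  of fun i j => d i * a i j

section CommRing

variable [CommRing K]

theorem transpose_form {d : Fin n → K} (hsym : ∀ i j, d i * a i j = d j * a j i) :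
    (form a d)ᵀ = form a d := by
  ext i j
  exact hsym j i

theorem dotProduct_form_mulVec (d v : Fin n → K) :
    v ⬝ᵥ form a d *ᵥ v = ∑ i, ∑ j, d i * a i j * v i * v j := by
  simp only [dotProduct, mulVec, form, of_apply, Finset.mul_sum]
  exact Finset.sum_congr rfl fun i _ => Finset.sum_congr rfl fun j _ => by ring

theorem posDef_form_iff [PartialOrder K] [StarRing K] [TrivialStar K] {d : Fin n → K}
    (hsym : ∀ i j, d i * a i j = d j * a j i) :
    (form a d).PosDef ↔
      ∀ v : Fin n → K, v ≠ 0 → 0 < ∑ i, ∑ j, d i * a i j * v i * v j := by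
  simp only [posDef_iff_dotProduct_mulVec, isHermitian_iff_isSymm, star_trivial,
    dotProduct_form_mulVec]
  exact and_iff_right (transpose_form a hsym)

theorem cartanRefl_map_mulVec_single (i j : Fin n) :
    (cartanRefl a i).map (Int.cast : ℤ → K) *ᵥ Pi.single j 1 =
      Pi.single j 1 - (a i j : K) • Pi.single i 1 := by
  ext l
  by_cases hl : l = i <;> by_cases hj : l = j <;> simp [cartanRefl, Pi.single_apply, hl, hj]

theorem cartanRefl_mul_self (hdiag : ∀ i, a i i = 2) (i : Fin n) :
    cartanRefl a i * cartanRefl a i = 1 := by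
  have h := cartanRefl_map_mulVec_single (K := ℤ) a i
  rw [show (cartanRefl a i).map (Int.cast : ℤ → ℤ) = cartanRefl a i from map_id' _] at h
  simp only [Int.cast_id] at h
  refine ext_of_mulVec_single fun j => ?_
  rw [← mulVec_mulVec, h, mulVec_sub, mulVec_smul, h, h, hdiag, one_mulVec]
  module

theorem transpose_cartanRefl_mul_mul_apply (P : Matrix (Fin n) (Fin n) K) (i k l : Fin n) :
    (((cartanRefl a i).map (Int.cast : ℤ → K))ᵀ * P *
      (cartanRefl a i).map (Int.cast : ℤ → K)) k l =
        P k l - a i l * P k i - a i k * P i l + a i k * a i l * P i i := by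
  rw [← single_dotProduct_mulVec_single (_ * _), ← mulVec_dotProduct_mulVec_mulVec,
    cartanRefl_map_mulVec_single, cartanRefl_map_mulVec_single]
  simp only [mulVec_sub, mulVec_smul, sub_dotProduct, dotProduct_sub, smul_dotProduct,
    dotProduct_smul, single_dotProduct_mulVec_single, smul_eq_mul]
  ring

theorem transpose_cartanRefl_mul_form_mul (hdiag : ∀ i, a i i = 2) {d : Fin n → K}
    (hsym : ∀ i j, d i * a i j = d j * a j i) (i : Fin n) :
    ((cartanRefl a i).map (Int.cast : ℤ → K))ᵀ * form a d *
      (cartanRefl a i).map (Int.cast : ℤ → K) = form a d := by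
  ext k l
  simp only [transpose_cartanRefl_mul_mul_apply, form, of_apply, hdiag]
  linear_combination -(a i l : K) * hsym k i

theorem weylGroup_le_comap_isometryGroup (hdiag : ∀ i, a i i = 2) {d : Fin n → K}
    (hsym : ∀ i j, d i * a i j = d j * a j i) :
    weylGroup a ≤
      (isometryGroup (form a d)).comap (GeneralLinearGroup.map (Int.castRingHom K)) := by
  rw [weylGroup, Subgroup.closure_le]
  rintro g ⟨i, hg⟩
  change ((g : Matrix (Fin n) (Fin n) ℤ).map (Int.cast : ℤ → K))ᵀ * _ *
    (g : Matrix (Fin n) (Fin n) ℤ).map (Int.cast : ℤ → K) = _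
  rw [hg]
  exact transpose_cartanRefl_mul_form_mul a hdiag hsym i

theorem mul_apply_self_eq_two_mul_apply (hdiag : ∀ i, a i i = 2) {P : Matrix (Fin n) (Fin n) K}
    (hP : weylGroup a ≤ (isometryGroup P).comap (GeneralLinearGroup.map (Int.castRingHom K)))
    (i j : Fin n) : a i j * P i i = 2 * P i j := by
  let s : GL (Fin n) ℤ := ⟨cartanRefl a i, cartanRefl a i,
    cartanRefl_mul_self a hdiag i, cartanRefl_mul_self a hdiag i⟩
  have hsW : s ∈ weylGroup a := Subgroup.subset_closure ⟨i, rfl⟩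
  have hs := hP hsW
  change ((cartanRefl a i).map (Int.cast : ℤ → K))ᵀ * P *
      (cartanRefl a i).map (Int.cast : ℤ → K) = P at hs
  have h := congr_fun (congr_fun hs i) j
  rw [transpose_cartanRefl_mul_mul_apply, hdiag] at h
  linear_combination h

end CommRing

theorem finite_weylGroup_of_posDef [Field K] [LinearOrder K] [IsStrictOrderedRing K]
    [FloorRing K] [StarRing K] [TrivialStar K] (hdiag : ∀ i, a i i = 2) {d : Fin n → K}
    (hsym : ∀ i j, d i * a i j = d j * a j i) (hB : (form a d).PosDef) :
    (weylGroup a : Set (GL (Fin n) ℤ)).Finite :=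
  (hB.finite_setOf_transpose_map_mul_mul_eq.preimage Units.val_injective.injOn).subset
    (weylGroup_le_comap_isometryGroup a hdiag hsym)

theorem posDef_form_of_finite_weylGroup (hdiag : ∀ i, a i i = 2) {d : Fin n → ℝ}
    (hd : ∀ i, 0 < d i) (hsym : ∀ i j, d i * a i j = d j * a j i)
    (hW : (weylGroup a : Set (GL (Fin n) ℤ)).Finite) : (form a d).PosDef := by
  set G := (weylGroup a).map (GeneralLinearGroup.map (Int.castRingHom ℝ))
  have : Finite G := (hW.image _).to_subtype
  obtain ⟨P, hP, hGP⟩ := exists_posDef_le_isometryGroup G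
  have hreflection := mul_apply_self_eq_two_mul_apply a hdiag (Subgroup.map_le_iff_le_comap.mp hGP)
  set q : Fin n → ℝ := fun i => 2 * d i / P i i
  have hform : form a d = diagonal q * P := by
    ext i j
    have := hP.diag_pos (i := i)
    simp only [form, of_apply, diagonal_mul, q]
    field_simp
    linear_combination d i * hreflection i j
  have hcomm : Commute (diagonal q) P := by
    have h := transpose_form a hsym
    rwa [hform, transpose_mul, diagonal_transpose,
      (isHermitian_iff_isSymm.mp hP.isHermitian).eq, eq_comm] at h
  exact hform ▸ hP.diagonal_mul_of_commute (fun i => div_pos (mul_pos two_pos (hd i)) hP.diag_pos)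
    hcomm

end CartanMatrix

theorem stmt12_general {n : ℕ} (a : Fin n → Fin n → ℤ)
    (hdiag : ∀ i, a i i = 2)
    (d : Fin n → ℚ) (hdpos : ∀ i, 0 < d i)
    (hsym : ∀ i j, d i * a i j = d j * a j i) :
    ((Set.Finite (weylGroup a : Set (Matrix.GeneralLinearGroup (Fin n) ℤ)) ∧
        ∀ v : Fin n → ℤ, Set.Finite
          {u : Fin n → ℤ | ∃ w ∈ weylGroup a,
            u = (w : Matrix (Fin n) (Fin n) ℤ).mulVec v}) →
      ∀ v : Fin n → ℚ, v ≠ 0 → 0 < ∑ i, ∑ j, d i * (a i j : ℚ) * v i * v j) ∧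
    ((∀ v : Fin n → ℚ, v ≠ 0 → 0 < ∑ i, ∑ j, d i * (a i j : ℚ) * v i * v j) →
      Set.Finite (weylGroup a : Set (Matrix.GeneralLinearGroup (Fin n) ℤ))) := by
  have hsymℝ (i j : Fin n) : (d i : ℝ) * a i j = d j * a j i := by exact_mod_cast hsym i j
  refine ⟨fun ⟨hW, _⟩ v hv => ?_, fun hpos => ?_⟩
  · have hB := CartanMatrix.posDef_form_of_finite_weylGroup a hdiag
      (fun i => by exact_mod_cast hdpos i) hsymℝ hW
    have hv' : (fun i => (v i : ℝ)) ≠ 0 := fun h =>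
      hv (funext fun i => by simpa using congr_fun h i)
    exact_mod_cast (CartanMatrix.posDef_form_iff a hsymℝ).mp hB _ hv'
  · exact CartanMatrix.finite_weylGroup_of_posDef a hdiag hsym
      ((CartanMatrix.posDef_form_iff a hsym).mpr hpos)

/-- If every Weyl group orbit in `ℤⁿ` is finite and the Weyl group itself is finite,
then the symmetrizable generalized Cartan matrix is of finite type (the symmetrized
bilinear form is positive definite); conversely, finite type implies that the Weyl
group is finite. -/
theorem stmt12 {n : ℕ} (a : Fin n → Fin n → ℤ)
    (hdiag : ∀ i, a i i = 2)
    (hoff : ∀ i j, i ≠ j → a i j ≤ 0)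
    (hzero : ∀ i j, a i j = 0 ↔ a j i = 0)
    (d : Fin n → ℚ) (hdpos : ∀ i, 0 < d i)
    (hsym : ∀ i j, d i * a i j = d j * a j i) :
    ((Set.Finite (weylGroup a : Set (Matrix.GeneralLinearGroup (Fin n) ℤ)) ∧
        ∀ v : Fin n → ℤ, Set.Finite
          {u : Fin n → ℤ | ∃ w ∈ weylGroup a,
            u = (w : Matrix (Fin n) (Fin n) ℤ).mulVec v}) →
      ∀ v : Fin n → ℚ, v ≠ 0 → 0 < ∑ i, ∑ j, d i * (a i j : ℚ) * v i * v j) ∧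
    ((∀ v : Fin n → ℚ, v ≠ 0 → 0 < ∑ i, ∑ j, d i * (a i j : ℚ) * v i * v j) →
      Set.Finite (weylGroup a : Set (Matrix.GeneralLinearGroup (Fin n) ℤ))) :=
  stmt12_general a hdiag d hdpos hsym
end

section
/- Let C be a generalized Cartan matrix whose Dynkin diagram has no cycle (is a forest). Then C is symmetrizable. -/
/-!
Put `d i = 1` at a chosen root of each component of the Dynkin diagram and propagate along the
unique path to every other vertex by `d j = d i * a i j / a j i` across each edge `i — j`. In a
forest the two paths reaching the ends of an edge differ by exactly that edge, so the relation
holds on every edge, hence `d i * a i j = d j * a j i` everywhere; the ratios are positive because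
adjacent entries are both negative.
-/

namespace SimpleGraph

variable {V α : Type*} [Group α] {G : SimpleGraph V}

def Walk.dartProd (w : ∀ ⦃u v⦄, G.Adj u v → α) {u v : V} (p : G.Walk u v) : α :=
  (p.darts.map fun d => w d.adj).prod

@[simp]
lemma Walk.dartProd_concat (w : ∀ ⦃u v⦄, G.Adj u v → α) {u v x : V} (p : G.Walk u v)
    (h : G.Adj v x) : (p.concat h).dartProd w = p.dartProd w * w h := by
  simp [dartProd, darts_concat]

@[simp]
lemma Walk.dartProd_copy (w : ∀ ⦃u v⦄, G.Adj u v → α) {u v u' v' : V} (p : G.Walk u v)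
    (hu : u = u') (hv : v = v') : (p.copy hu hv).dartProd w = p.dartProd w := by
  simp [dartProd, darts_copy]

lemma IsAcyclic.eq_concat_or_eq_concat (hG : G.IsAcyclic) {s u v : V} {p : G.Walk s u}
    {q : G.Walk s v} (hp : p.IsPath) (hq : q.IsPath) (h : G.Adj u v) :
    q = p.concat h ∨ p = q.concat h.symm := by
  by_cases hu : u ∈ q.support
  · exact .inl (hG.path_concat hp hq h hu)
  · exact .inr (hG.path_concat hq hp h.symm
      (hG.mem_support_of_ne_mem_support_of_adj_of_isPath hp hq h hu))

lemma IsAcyclic.dartProd_eq_of_adj (hG : G.IsAcyclic) (w : ∀ ⦃u v⦄, G.Adj u v → α)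
    (hw : ∀ ⦃u v⦄ (h : G.Adj u v), w h.symm = (w h)⁻¹) {s u v : V} {p : G.Walk s u}
    {q : G.Walk s v} (hp : p.IsPath) (hq : q.IsPath) (h : G.Adj u v) :
    q.dartProd w = p.dartProd w * w h := by
  rcases hG.eq_concat_or_eq_concat hp hq h with rfl | rfl
  · exact Walk.dartProd_concat w p h
  · rw [Walk.dartProd_concat, hw h, inv_mul_cancel_right]

theorem IsAcyclic.exists_potential (hG : G.IsAcyclic) (w : ∀ ⦃u v⦄, G.Adj u v → α)
    (hw : ∀ ⦃u v⦄ (h : G.Adj u v), w h.symm = (w h)⁻¹) :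
    ∃ d : V → α, ∀ ⦃u v⦄ (h : G.Adj u v), d v = d u * w h := by
  classical
  let root (u : V) : V := (G.connectedComponentMk u).out
  have reach (u : V) : G.Reachable (root u) u :=
    ConnectedComponent.exact (G.connectedComponentMk u).out_eq
  let path (u : V) : G.Path (root u) u := (reach u).some.toPath
  refine ⟨fun u => (path u).1.dartProd w, fun u v h => ?_⟩
  have hroot : root v = root u := congrArg Quot.out (ConnectedComponent.sound h.reachable.symm)
  show (path v).1.dartProd w = (path u).1.dartProd w * w h
  rw [← Walk.dartProd_copy w (path v).1 hroot rfl]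
  exact hG.dartProd_eq_of_adj w hw (path u).2 ((Walk.isPath_copy _ _ _).2 (path v).2) h

end SimpleGraph

lemma neg_of_adj_fromRel_ne_zero {ι : Type*} {a : ι → ι → ℤ}
    (hoff : ∀ i j, i ≠ j → a i j ≤ 0) (hzero : ∀ i j, a i j = 0 ↔ a j i = 0) {i j : ι}
    (h : (SimpleGraph.fromRel fun i j : ι => a i j ≠ 0).Adj i j) : a i j < 0 := by
  obtain ⟨hne, hij | hji⟩ := SimpleGraph.fromRel_adj _ i j |>.1 h
  · exact (hoff i j hne).lt_of_ne hij
  · exact (hoff i j hne).lt_of_ne (mt (hzero i j).1 hji)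

theorem stmt13_general {n : ℕ} (a : Fin n → Fin n → ℤ)
    (hoff : ∀ i j, i ≠ j → a i j ≤ 0)
    (hzero : ∀ i j, a i j = 0 ↔ a j i = 0)
    (hforest : (SimpleGraph.fromRel fun i j : Fin n => a i j ≠ 0).IsAcyclic) :
    ∃ d : Fin n → ℚ, (∀ i, 0 < d i) ∧ ∀ i j, d i * a i j = d j * a j i := by
  have hneg {i j : Fin n} (h : (SimpleGraph.fromRel fun i j : Fin n => a i j ≠ 0).Adj i j) : (a i j : ℚ) < 0 := by
    exact_mod_cast neg_of_adj_fromRel_ne_zero hoff hzero h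
  obtain ⟨d, hd⟩ := hforest.exists_potential (α := {x : ℚ // 0 < x})
    (fun i j h => ⟨a i j / a j i, div_pos_of_neg_of_neg (hneg h) (hneg h.symm)⟩)
    (fun i j h => Subtype.ext (inv_div _ _).symm)
  refine ⟨fun i => d i, fun i => (d i).2, fun i j => ?_⟩
  rcases eq_or_ne i j with rfl | hne
  · rfl
  by_cases hij : a i j = 0
  · simp [hij, (hzero i j).1 hij]
  have h : (SimpleGraph.fromRel fun i j : Fin n => a i j ≠ 0).Adj i j := ⟨hne, .inl hij⟩
  simp only [hd h, Positive.val_mul]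
  field_simp [(hneg h.symm).ne]

/-- A generalized Cartan matrix whose Dynkin diagram has no cycle (is a forest)
is symmetrizable. -/
theorem stmt13 {n : ℕ} (a : Fin n → Fin n → ℤ)
    (hdiag : ∀ i, a i i = 2)
    (hoff : ∀ i j, i ≠ j → a i j ≤ 0)
    (hzero : ∀ i j, a i j = 0 ↔ a j i = 0)
    (hforest : (SimpleGraph.fromRel fun i j : Fin n => a i j ≠ 0).IsAcyclic) :
    ∃ d : Fin n → ℚ, (∀ i, 0 < d i) ∧ ∀ i j, d i * a i j = d j * a j i :=
  stmt13_general a hoff hzero hforest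
end

section
/- Let σ be a diagonal braiding on V = span{x_1,...,x_n} given by σ(x_i ⊗ x_j) = q_{ij} x_j ⊗ x_i, and define ad_σ x_i(ρ) = x_i ρ − (g_i·ρ) x_i in the Nichols algebra B(V), where g_i acts on a ℤⁿ-homogeneous element ρ of degree (d_1,...,d_n) by the scalar ∏_j q_{ij}^{d_j}. Then the right skew-differential operator ∂_i^R satisfies ∂_i^R((ad_σ x_i)^m(x_j)) = q_{ji}^{−1} [m]_{q_{ii}^{−1}} (1 − q_{ii}^{m−1} q_{ij} q_{ji}) (ad_σ x_i)^{m−1}(x_j) for all m ∈ ℕ and j ≠ i. -/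
/-!
Write `y_m = (ad_σ xᵢ)^m (x_j)`. Both `gᵢ` and `eᵢ⁻¹` act diagonally on every `y_m`, so
`y_{m+1} = xᵢ y_m - c_m y_m xᵢ` with `c_m = q_{ii}^m q_{ij}`. Applying the twisted Leibniz rule
to this, the twist `q_{ii}⁻¹` picked up by `xᵢ` turns `c_{m+1}` back into `c_m`, so the terms
containing `∂ᵢᴿ(y_m)` recombine into a multiple of `y_m` and `∂ᵢᴿ(y_{m+1}) = a_{m+1} y_m` with
`a_{m+1} = a_m + q_{ii}^{-m} q_{ji}⁻¹ - q_{ii}^m q_{ij}`. Summing this recursion and reflecting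
the geometric sum of `q_{ii}^l` gives the stated closed form.
-/

open Finset

section BraidedAd

variable {k B : Type*} [CommRing k] [Ring B] [Algebra k B]

def braidedAd (σ : B →ₐ[k] B) (a ρ : B) : B := a * ρ - σ ρ * a

theorem AlgHom.map_mul_sub_smul_mul_of_eigen (φ : B →ₐ[k] B) {a y : B} {s t : k}
    (ha : φ a = s • a) (hy : φ y = t • y) (c : k) :
    φ (a * y - c • (y * a)) = (s * t) • (a * y - c • (y * a)) := by
  simp only [map_sub, map_mul, map_smul, ha, hy, smul_mul_assoc, mul_smul_comm, smul_smul,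
    smul_sub]
  module

variable (σ : B →ₐ[k] B) {a y : B} {s t : k}

theorem map_iterate_braidedAd (hσa : σ a = s • a) (hσy : σ y = t • y) (m : ℕ) :
    σ ((braidedAd σ a)^[m] y) = (s ^ m * t) • (braidedAd σ a)^[m] y := by
  induction m with
  | zero => simpa using hσy
  | succ m ih =>
    have h := σ.map_mul_sub_smul_mul_of_eigen hσa ih (s ^ m * t)
    rw [← smul_mul_assoc, ← ih] at h
    rw [Function.iterate_succ_apply', pow_succ', mul_assoc]
    exact h

theorem braidedAd_iterate_succ (hσa : σ a = s • a) (hσy : σ y = t • y) (m : ℕ) :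
    (braidedAd σ a)^[m + 1] y
      = a * (braidedAd σ a)^[m] y - (s ^ m * t) • ((braidedAd σ a)^[m] y * a) := by
  rw [Function.iterate_succ_apply', braidedAd, map_iterate_braidedAd σ hσa hσy,
    smul_mul_assoc]

theorem map_iterate_braidedAd_of_eigen (φ : B →ₐ[k] B) {u v : k}
    (hσa : σ a = s • a) (hσy : σ y = t • y) (hφa : φ a = u • a) (hφy : φ y = v • y)
    (m : ℕ) : φ ((braidedAd σ a)^[m] y) = (u ^ m * v) • (braidedAd σ a)^[m] y := by
  induction m with
  | zero => simpa using hφy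
  | succ m ih =>
    rw [braidedAd_iterate_succ σ hσa hσy, φ.map_mul_sub_smul_mul_of_eigen hφa ih,
      pow_succ', mul_assoc]

end BraidedAd

section SkewDerivation

variable {k B : Type*} [Field k] [Ring B] [Algebra k B]

theorem skewDeriv_iterate_braidedAd (σ E : B →ₐ[k] B) (D : B →ₗ[k] B)
    (hLeib : ∀ ρ₁ ρ₂ : B, D (ρ₁ * ρ₂) = ρ₁ * D ρ₂ + D ρ₁ * E ρ₂)
    {a y : B} {s t v : k} (hs : s ≠ 0)
    (hσa : σ a = s • a) (hσy : σ y = t • y) (hEa : E a = s⁻¹ • a) (hEy : E y = v • y)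
    (hDa : D a = 1) (hDy : D y = 0) (m : ℕ) :
    D ((braidedAd σ a)^[m + 1] y)
      = (∑ l ∈ range (m + 1), (s⁻¹ ^ l * v - s ^ l * t)) • (braidedAd σ a)^[m] y := by
  have hsucc := braidedAd_iterate_succ σ hσa hσy
  have hE := map_iterate_braidedAd_of_eigen σ E hσa hσy hEa hEy
  induction m with
  | zero =>
    rw [hsucc 0]
    simp [hLeib, hDa, hDy, hEy, sub_smul]
  | succ m ih =>
    have hY : a * (braidedAd σ a)^[m] y - (s ^ (m + 1) * t * s⁻¹) • ((braidedAd σ a)^[m] y * a)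
        = (braidedAd σ a)^[m + 1] y := by
      rw [hsucc m]
      congr 2
      field_simp
      ring
    rw [hsucc (m + 1), map_sub, map_smul, hLeib, hLeib, hDa, ih, hE, hEa,
      sum_range_succ _ (m + 1)]
    simp only [mul_one, one_mul, smul_mul_assoc, mul_smul_comm]
    linear_combination (norm := module) (∑ l ∈ range (m + 1), (s⁻¹ ^ l * v - s ^ l * t)) • hY

end SkewDerivation

theorem sum_range_inv_pow_sub_pow {k : Type*} [Field k] {s w : k} (hs : s ≠ 0) (hw : w ≠ 0)
    (t : k) (m : ℕ) :
    ∑ l ∈ range (m + 1), (s⁻¹ ^ l * w⁻¹ - s ^ l * t)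
      = w⁻¹ * (∑ l ∈ range (m + 1), s⁻¹ ^ l) * (1 - s ^ m * t * w) := by
  have hreflect : s ^ m * ∑ l ∈ range (m + 1), s⁻¹ ^ l = ∑ l ∈ range (m + 1), s ^ l := by
    rw [mul_sum]
    conv_rhs => rw [← sum_range_reflect]
    refine sum_congr rfl fun l hl => ?_
    have hlm : l ≤ m := Nat.lt_succ_iff.mp (mem_range.mp hl)
    rw [inv_pow, ← pow_sub₀ s hs hlm, Nat.add_sub_cancel]
  rw [sum_sub_distrib, ← sum_mul, ← sum_mul, ← hreflect]
  field_simp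

theorem stmt15_general {k : Type*} [Field k] {n : ℕ}
    {B : Type*} [Ring B] [Algebra k B]
    (q : Fin n → Fin n → k) (hq : ∀ i j, q i j ≠ 0)
    (x : Fin n → B)
    (g E : Fin n → (B →ₐ[k] B))
    (hg : ∀ i j, g i (x j) = q i j • x j)
    (hE : ∀ i j, E i (x j) = (q j i)⁻¹ • x j)
    (D : Fin n → (B →ₗ[k] B))
    (hDx : ∀ i j, D i (x j) = if i = j then 1 else 0)
    (hLeib : ∀ i (ρ₁ ρ₂ : B), D i (ρ₁ * ρ₂) = ρ₁ * D i ρ₂ + D i ρ₁ * E i ρ₂)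
    (i j : Fin n) (hij : j ≠ i) (m : ℕ) (hm : 1 ≤ m) :
    D i ((fun ρ => x i * ρ - g i ρ * x i)^[m] (x j)) =
      ((q j i)⁻¹ * (∑ l ∈ Finset.range m, ((q i i)⁻¹) ^ l) *
        (1 - q i i ^ (m - 1) * q i j * q j i)) •
      ((fun ρ => x i * ρ - g i ρ * x i)^[m - 1] (x j)) := by
  obtain ⟨m, rfl⟩ : ∃ m', m = m' + 1 := ⟨m - 1, by omega⟩
  rw [Nat.add_sub_cancel, ← sum_range_inv_pow_sub_pow (hq i i) (hq j i)]
  exact skewDeriv_iterate_braidedAd (g i) (E i) (D i) (hLeib i) (hq i i) (hg i i) (hg i j)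
    (hE i i) (hE i j) (by simp [hDx]) (by simp [hDx, hij.symm]) m

/-- In a braided vector space of diagonal type with constants `q i j`, the right
skew-differential operator satisfies
`∂ᵢᴿ((ad_σ xᵢ)^m (x_j)) = q_{ji}⁻¹ [m]_{q_{ii}⁻¹} (1 - q_{ii}^{m-1} q_{ij} q_{ji})
  (ad_σ xᵢ)^{m-1}(x_j)` for `m ≥ 1` and `j ≠ i`.
Here `B` is an algebra carrying the actions `g i` of the group-likes `gᵢ` and
`E i` of `eᵢ⁻¹` (algebra endomorphisms acting on the generators by the indicated
scalars) and the right skew-differential operators `D i` characterized by their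
values on generators and the twisted Leibniz rule. -/
theorem stmt15 {k : Type*} [Field k] [CharZero k] {n : ℕ}
    {B : Type*} [Ring B] [Algebra k B]
    (q : Fin n → Fin n → k) (hq : ∀ i j, q i j ≠ 0)
    (x : Fin n → B)
    (g E : Fin n → (B →ₐ[k] B))
    (hg : ∀ i j, g i (x j) = q i j • x j)
    (hE : ∀ i j, E i (x j) = (q j i)⁻¹ • x j)
    (D : Fin n → (B →ₗ[k] B))
    (hD1 : ∀ i, D i 1 = 0)
    (hDx : ∀ i j, D i (x j) = if i = j then 1 else 0)
    (hLeib : ∀ i (ρ₁ ρ₂ : B), D i (ρ₁ * ρ₂) = ρ₁ * D i ρ₂ + D i ρ₁ * E i ρ₂)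
    (i j : Fin n) (hij : j ≠ i) (m : ℕ) (hm : 1 ≤ m) :
    D i ((fun ρ => x i * ρ - g i ρ * x i)^[m] (x j)) =
      ((q j i)⁻¹ * (∑ l ∈ Finset.range m, ((q i i)⁻¹) ^ l) *
        (1 - q i i ^ (m - 1) * q i j * q j i)) •
      ((fun ρ => x i * ρ - g i ρ * x i)^[m - 1] (x j)) :=
  stmt15_general q hq x g E hg hE D hDx hLeib i j hij m hm
end

section
/- In the Nichols algebra B(V) of a diagonal braiding with constants q_{ij}, the element (ad_σ x_i)^{m_{ij}+1}(x_j) = 0 and (ad_σ x_i)^{m_{ij}}(x_j) ≠ 0, where m_{ij} = min{ m ∈ ℕ₀ : [m+1]_{q_{ii}}(q_{ii}^m q_{ij} q_{ji} − 1) = 0 }, provided this minimum exists. -/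
noncomputable section

open FreeAlgebra

/-- The product in the free algebra of the generators indexed by a word. -/
def wordProd {k : Type*} [Field k] {n : ℕ} (w : List (Fin n)) :
    FreeAlgebra k (Fin n) :=
  (w.map (FreeAlgebra.ι k)).prod

/-- The left skew-differential operator `∂ᵢᴸ` on words, defined by
`∂ᵢ(x_j w) = δ_{ij} w + q_{ij}⁻¹ x_j ∂ᵢ(w)` (the twisted Leibniz rule for the
diagonal braiding with constants `q`). -/
def Dword {k : Type*} [Field k] {n : ℕ} (q : Fin n → Fin n → k) (i : Fin n) :
    List (Fin n) → FreeAlgebra k (Fin n)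
  | [] => 0
  | j :: t => (if i = j then wordProd t else 0)
      + (q i j)⁻¹ • (FreeAlgebra.ι k j * Dword q i t)

/-- The left skew-differential operator `∂ᵢᴸ`, extended linearly to the free
algebra using its basis of words. -/
def Dop {k : Type*} [Field k] {n : ℕ} (q : Fin n → Fin n → k) (i : Fin n) :
    FreeAlgebra k (Fin n) →ₗ[k] FreeAlgebra k (Fin n) :=
  (FreeAlgebra.basisFreeMonoid k (Fin n)).constr k
    fun w : FreeMonoid (Fin n) => Dword q i w.toList

/-- The counit (constant-term functional) of the free algebra. -/
def constTerm (k : Type*) [Field k] (n : ℕ) : FreeAlgebra k (Fin n) →ₐ[k] k :=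
  FreeAlgebra.lift k (fun _ : Fin n => (0 : k))

/-- Iterated application of the differential operators along a word. -/
def DopWord {k : Type*} [Field k] {n : ℕ} (q : Fin n → Fin n → k) :
    List (Fin n) → (FreeAlgebra k (Fin n) →ₗ[k] FreeAlgebra k (Fin n)) :=
  fun w => w.foldr (fun i f => (Dop q i).comp f) LinearMap.id

/-- The defining relation of the Nichols algebra `B(V)` of the diagonal braiding
with constants `q`: two elements of the tensor (free) algebra are identified iff
their difference is annihilated, after applying any composition of
skew-differential operators, by the constant-term functional.  (The set of such
differences is exactly the kernel of the braided symmetrizer maps, i.e. the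
defining ideal of the Nichols algebra.) -/
def nicholsRel {k : Type*} [Field k] {n : ℕ} (q : Fin n → Fin n → k) :
    FreeAlgebra k (Fin n) → FreeAlgebra k (Fin n) → Prop :=
  fun x y => ∀ w : List (Fin n), constTerm k n (DopWord q w (x - y)) = 0

/-- The action of the group-like element `gᵢ` on the free algebra. -/
def gAct {k : Type*} [Field k] {n : ℕ} (q : Fin n → Fin n → k) (i : Fin n) :
    FreeAlgebra k (Fin n) →ₐ[k] FreeAlgebra k (Fin n) :=
  FreeAlgebra.lift k (fun j : Fin n => q i j • FreeAlgebra.ι k j)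

/-- The braided adjoint action `ad_σ xᵢ (ρ) = xᵢ ρ - (gᵢ·ρ) xᵢ`. -/
def adSigma {k : Type*} [Field k] {n : ℕ} (q : Fin n → Fin n → k) (i : Fin n) :
    FreeAlgebra k (Fin n) → FreeAlgebra k (Fin n) :=
  fun ρ => FreeAlgebra.ι k i * ρ - gAct q i ρ * FreeAlgebra.ι k i

/-!
The defining ideal of `B(V)` consists of the elements all of whose iterated skew derivatives
`∂_w` have zero constant term; it is a two-sided ideal because of the twisted Leibniz rule
`∂_a(uv) = ∂_a(u) v + (g_a⁻¹·u) ∂_a(v)`. For `Z_m = (ad_σ x_i)^m(x_j)` one computes `∂_a Z_m = 0`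
for `a ≠ j` and `∂_j Z_m = ∏_{l<m} (q_{ji}⁻¹ - q_{ii}^l q_{ij}) x_i^m`, while
`∂_i^m x_i^m = ∏_{l<m} [l+1]_{q_{ii}⁻¹}`. Up to units, the `l`-th factors of these two products
are the two factors of `[l+1]_{q_{ii}} (q_{ii}^l q_{ij} q_{ji} - 1)`. Hence below `m_{ij}` nothing
vanishes and `∂_i^m ∂_j Z_m ≠ 0`, while at `m = m_{ij}` either `∂_j Z_{m+1} = 0` or `x_i^{m+1}` is
in the ideal, and in both cases `Z_{m+1}` is in the ideal.
-/

theorem RingQuot.ringCon_of_mkRingHom_eq {R : Type*} [Semiring R] {r : R → R → Prop}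
    (c : RingCon R) (hrc : ∀ ⦃x y⦄, r x y → c x y) {x y : R}
    (h : mkRingHom r x = mkRingHom r y) : c x y := by
  have hc : ∀ ⦃x y⦄, r x y → c.mk' x = c.mk' y := fun _ _ hxy => c.eq.mpr (hrc hxy)
  have := congrArg (RingQuot.lift ⟨c.mk', hc⟩) h
  rw [lift_mkRingHom_apply, lift_mkRingHom_apply] at this
  exact c.eq.mp this

theorem pow_mul_geom_sum_inv {K : Type*} [Field K] {p : K} (hp : p ≠ 0) (m : ℕ) :
    p ^ m * ∑ l ∈ Finset.range (m + 1), p⁻¹ ^ l = ∑ l ∈ Finset.range (m + 1), p ^ l := by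
  induction m with
  | zero => simp
  | succ m ih =>
    rw [Finset.sum_range_succ _ (m + 1), geom_sum_succ (n := m + 1), ← ih, inv_pow,
      mul_add, mul_inv_cancel₀ (pow_ne_zero _ hp), pow_succ]
    ring

theorem geom_sum_mul_sub_one_eq_zero_iff {K : Type*} [Field K] {p a b : K} (hp : p ≠ 0)
    (hb : b ≠ 0) (m : ℕ) :
    (∑ l ∈ Finset.range (m + 1), p ^ l) * (p ^ m * a * b - 1) = 0 ↔
      ∑ l ∈ Finset.range (m + 1), p⁻¹ ^ l = 0 ∨ b⁻¹ - p ^ m * a = 0 := by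
  rw [mul_eq_zero, ← pow_mul_geom_sum_inv hp, mul_eq_zero, sub_eq_zero, sub_eq_zero,
    mul_eq_one_iff_eq_inv₀ hb, eq_comm (a := b⁻¹)]
  simp [pow_ne_zero _ hp]

section SkewDerivations

variable {k : Type*} [Field k] {n : ℕ} (q : Fin n → Fin n → k)

theorem wordProd_cons (a : Fin n) (w : List (Fin n)) :
    wordProd (a :: w) = ι k a * wordProd w := by
  simp [wordProd]

theorem basisFreeMonoid_eq_wordProd (m : FreeMonoid (Fin n)) :
    basisFreeMonoid k (Fin n) m = wordProd m.toList := by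
  simp only [basisFreeMonoid, equivMonoidAlgebraFreeMonoid, MonoidAlgebra.of_apply,
    LinearEquiv.trans_symm, Module.Basis.map_apply, Finsupp.coe_basisSingleOne,
    LinearEquiv.trans_apply, MonoidAlgebra.coeffLinearEquiv_symm_apply,
    MonoidAlgebra.ofCoeff_single, AlgEquiv.coe_symm_toLinearEquiv, AlgEquiv.ofAlgHom_symm_apply,
    MonoidAlgebra.lift_single, FreeMonoid.lift_apply, one_smul, wordProd]

theorem Dop_wordProd (i : Fin n) (w : List (Fin n)) : Dop q i (wordProd w) = Dword q i w := by
  have := (basisFreeMonoid k (Fin n)).constr_basis k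
    (fun w : FreeMonoid (Fin n) => Dword q i w.toList) (FreeMonoid.ofList w)
  rwa [basisFreeMonoid_eq_wordProd, FreeMonoid.toList_ofList] at this

theorem Dop_one (i : Fin n) : Dop q i 1 = 0 :=
  Dop_wordProd q i []

theorem Dop_algebraMap (i : Fin n) (c : k) : Dop q i (algebraMap k _ c) = 0 := by
  rw [Algebra.algebraMap_eq_smul_one, map_smul, Dop_one, smul_zero]

theorem Dop_ι_mul (a l : Fin n) (v : FreeAlgebra k (Fin n)) :
    Dop q a (ι k l * v) = (if a = l then v else 0) + (q a l)⁻¹ • (ι k l * Dop q a v) := by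
  suffices (Dop q a).comp (LinearMap.mulLeft k (ι k l)) =
      (if a = l then LinearMap.id else 0) +
        (q a l)⁻¹ • (LinearMap.mulLeft k (ι k l)).comp (Dop q a) by
    have := LinearMap.congr_fun this v
    split_ifs at this ⊢ <;> simpa using this
  refine (basisFreeMonoid k (Fin n)).ext fun m => ?_
  have := Dop_wordProd q a (l :: m.toList)
  rw [wordProd_cons, Dword] at this
  simp only [basisFreeMonoid_eq_wordProd, LinearMap.comp_apply, LinearMap.mulLeft_apply,
    LinearMap.add_apply, LinearMap.smul_apply]
  rw [this, Dop_wordProd]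
  split_ifs <;> simp [wordProd]

theorem Dop_ι (a l : Fin n) : Dop q a (ι k l) = if a = l then 1 else 0 := by
  simpa [Dop_one] using Dop_ι_mul q a l 1

theorem gAct_ι (r : Fin n → Fin n → k) (a l : Fin n) : gAct r a (ι k l) = r a l • ι k l := by
  simp [gAct]

theorem gAct_comm (r s : Fin n → Fin n → k) (a b : Fin n) (x : FreeAlgebra k (Fin n)) :
    gAct r a (gAct s b x) = gAct s b (gAct r a x) := by
  change ((gAct r a).comp (gAct s b)) x = ((gAct s b).comp (gAct r a)) x
  congr 1
  ext l
  simp only [Function.comp_apply, AlgHom.comp_apply, gAct_ι, map_smul, smul_smul, mul_comm]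

theorem constTerm_ι (l : Fin n) : constTerm k n (ι k l) = 0 := by
  simp [constTerm]

theorem constTerm_gAct (r : Fin n → Fin n → k) (a : Fin n) (x : FreeAlgebra k (Fin n)) :
    constTerm k n (gAct r a x) = constTerm k n x := by
  change ((constTerm k n).comp (gAct r a)) x = constTerm k n x
  congr 1
  ext l
  simp [gAct_ι, constTerm_ι]

theorem Dop_mul (a : Fin n) (u v : FreeAlgebra k (Fin n)) :
    Dop q a (u * v) = Dop q a u * v + gAct (fun s t => (q s t)⁻¹) a u * Dop q a v := by
  induction u using FreeAlgebra.induction generalizing v with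
  | grade0 c => simp [Algebra.algebraMap_eq_smul_one, Dop_one]
  | grade1 l =>
    rw [Dop_ι_mul, Dop_ι, gAct_ι, smul_mul_assoc]
    split_ifs <;> simp
  | mul u₁ u₂ ih₁ ih₂ =>
    rw [mul_assoc, ih₁, ih₂, ih₁ u₂, map_mul]
    noncomm_ring
  | add u₁ u₂ ih₁ ih₂ =>
    rw [add_mul, map_add, ih₁, ih₂, map_add, map_add]
    noncomm_ring

theorem Dop_gAct (r : Fin n → Fin n → k) (a b : Fin n) (x : FreeAlgebra k (Fin n)) :
    Dop q b (gAct r a x) = r a b • gAct r a (Dop q b x) := by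
  induction x using FreeAlgebra.induction with
  | grade0 c => simp [Dop_algebraMap]
  | grade1 l =>
    rw [gAct_ι, map_smul, Dop_ι]
    split_ifs with h <;> simp [h]
  | mul u v ihu ihv =>
    rw [map_mul, Dop_mul, ihu, ihv, Dop_mul, map_add, map_mul, map_mul, gAct_comm]
    simp only [smul_add, smul_mul_assoc, mul_smul_comm]
  | add u v ihu ihv => simp only [map_add, ihu, ihv, smul_add]

end SkewDerivations

section NicholsIdeal

variable {k : Type*} [Field k] {n : ℕ} (q : Fin n → Fin n → k)

theorem DopWord_append_singleton (w : List (Fin n)) (a : Fin n) (x : FreeAlgebra k (Fin n)) :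
    DopWord q (w ++ [a]) x = DopWord q w (Dop q a x) := by
  induction w with
  | nil => rfl
  | cons b w ih => exact congrArg (Dop q b) ih

theorem DopWord_gAct (r : Fin n → Fin n → k) (a : Fin n) (w : List (Fin n))
    (x : FreeAlgebra k (Fin n)) :
    DopWord q w (gAct r a x) = (w.map (r a)).prod • gAct r a (DopWord q w x) := by
  induction w with
  | nil => simp [DopWord]
  | cons b w ih =>
    simp only [DopWord, List.foldr_cons, LinearMap.comp_apply] at ih ⊢
    rw [ih, map_smul, Dop_gAct, smul_smul, List.map_cons, List.prod_cons, mul_comm]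

def nicholsKer : Submodule k (FreeAlgebra k (Fin n)) :=
  ⨅ w : List (Fin n), LinearMap.ker ((constTerm k n).toLinearMap ∘ₗ DopWord q w)

variable {q}

theorem mem_nicholsKer {z : FreeAlgebra k (Fin n)} :
    z ∈ nicholsKer q ↔ ∀ w, constTerm k n (DopWord q w z) = 0 := by
  simp [nicholsKer]

theorem mem_nicholsKer_iff_Dop {z : FreeAlgebra k (Fin n)} :
    z ∈ nicholsKer q ↔ constTerm k n z = 0 ∧ ∀ a, Dop q a z ∈ nicholsKer q := by
  simp only [mem_nicholsKer, ← DopWord_append_singleton]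
  refine ⟨fun h => ⟨h [], fun a w => h _⟩, fun ⟨h₀, h⟩ w => ?_⟩
  rcases List.eq_nil_or_concat' w with rfl | ⟨w, a, rfl⟩
  · exact h₀
  · exact h a w

theorem gAct_mem_nicholsKer {z : FreeAlgebra k (Fin n)} (hz : z ∈ nicholsKer q)
    (r : Fin n → Fin n → k) (a : Fin n) : gAct r a z ∈ nicholsKer q := by
  rw [mem_nicholsKer] at hz ⊢
  intro w
  rw [DopWord_gAct, map_smul, constTerm_gAct, hz w, smul_zero]

theorem mul_mem_nicholsKer_left (u : FreeAlgebra k (Fin n)) {z : FreeAlgebra k (Fin n)}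
    (hz : z ∈ nicholsKer q) : u * z ∈ nicholsKer q := by
  rw [mem_nicholsKer]
  intro w
  induction w using List.reverseRecOn generalizing u z with
  | nil => simp [DopWord, (mem_nicholsKer_iff_Dop.mp hz).1]
  | append_singleton w a ih =>
    have hDz := (mem_nicholsKer_iff_Dop.mp hz).2 a
    rw [DopWord_append_singleton, Dop_mul, map_add, map_add, ih _ hz, ih _ hDz, add_zero]

theorem mul_mem_nicholsKer_right {z : FreeAlgebra k (Fin n)} (hz : z ∈ nicholsKer q)
    (u : FreeAlgebra k (Fin n)) : z * u ∈ nicholsKer q := by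
  rw [mem_nicholsKer]
  intro w
  induction w using List.reverseRecOn generalizing u z with
  | nil => simp [DopWord, (mem_nicholsKer_iff_Dop.mp hz).1]
  | append_singleton w a ih =>
    have hDz := (mem_nicholsKer_iff_Dop.mp hz).2 a
    rw [DopWord_append_singleton, Dop_mul, map_add, map_add, ih hDz,
      ih (gAct_mem_nicholsKer hz _ a), add_zero]

variable (q) in
def nicholsIdeal : TwoSidedIdeal (FreeAlgebra k (Fin n)) :=
  .mk' (nicholsKer q) (zero_mem _) add_mem neg_mem (mul_mem_nicholsKer_left _)
    (mul_mem_nicholsKer_right · _)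

theorem nicholsRel_iff {x y : FreeAlgebra k (Fin n)} :
    nicholsRel q x y ↔ (nicholsIdeal q).ringCon x y := by
  rw [TwoSidedIdeal.rel_iff, nicholsIdeal, TwoSidedIdeal.mem_mk', SetLike.mem_coe, mem_nicholsKer]
  rfl

theorem mkAlgHom_nicholsRel_eq_zero_iff {z : FreeAlgebra k (Fin n)} :
    RingQuot.mkAlgHom k (nicholsRel q) z = 0 ↔ z ∈ nicholsKer q := by
  rw [← map_zero (RingQuot.mkAlgHom k (nicholsRel q))]
  constructor
  · intro h
    rw [← RingHom.coe_coe, RingQuot.mkAlgHom_coe] at h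
    have hrel := RingQuot.ringCon_of_mkRingHom_eq _ (fun _ _ => nicholsRel_iff.mp) h
    rwa [TwoSidedIdeal.rel_iff, sub_zero, nicholsIdeal, TwoSidedIdeal.mem_mk'] at hrel
  · intro hz
    refine RingQuot.mkAlgHom_rel k (mem_nicholsKer.mp ?_)
    rwa [sub_zero]

end NicholsIdeal

section Powers

variable {k : Type*} [Field k] {n : ℕ} (q : Fin n → Fin n → k) (i : Fin n)

theorem Dop_ι_pow_succ (a : Fin n) (N : ℕ) :
    Dop q a (ι k i ^ (N + 1)) =
      if a = i then (∑ l ∈ Finset.range (N + 1), (q i i)⁻¹ ^ l) • ι k i ^ N else 0 := by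
  induction N with
  | zero => simp [Dop_ι]
  | succ N ih =>
    rw [pow_succ', Dop_ι_mul, ih]
    split_ifs with hai
    · subst hai
      rw [geom_sum_succ (n := N + 1), add_smul, one_smul, mul_smul_comm, ← pow_succ', smul_smul,
        add_comm]
    · simp

theorem ι_pow_succ_mem_nicholsKer (N : ℕ)
    (hN : ∑ l ∈ Finset.range (N + 1), (q i i)⁻¹ ^ l = 0) : ι k i ^ (N + 1) ∈ nicholsKer q := by
  refine mem_nicholsKer_iff_Dop.mpr ⟨by simp [constTerm_ι], fun a => ?_⟩
  rw [Dop_ι_pow_succ, hN, zero_smul, ite_self]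
  exact zero_mem _

theorem constTerm_DopWord_replicate_ι_pow (N : ℕ) :
    constTerm k n (DopWord q (List.replicate N i) (ι k i ^ N)) =
      ∏ l ∈ Finset.range N, ∑ s ∈ Finset.range (l + 1), (q i i)⁻¹ ^ s := by
  induction N with
  | zero => simp [DopWord]
  | succ N ih =>
    rw [List.replicate_succ', DopWord_append_singleton, Dop_ι_pow_succ, if_pos rfl, map_smul,
      map_smul, ih, Finset.prod_range_succ, smul_eq_mul, mul_comm]

end Powers

section AdjointIterates

variable {k : Type*} [Field k] {n : ℕ} (q : Fin n → Fin n → k) (i j : Fin n)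

theorem gAct_adSigma_iterate (r : Fin n → Fin n → k) (a : Fin n) (m : ℕ) :
    gAct r a ((adSigma q i)^[m] (ι k j)) = (r a i ^ m * r a j) • (adSigma q i)^[m] (ι k j) := by
  induction m generalizing r a with
  | zero => simp [gAct_ι]
  | succ m ih =>
    rw [Function.iterate_succ_apply', adSigma, ih q i, map_sub, map_mul, map_mul, map_smul,
      gAct_ι, ih r a]
    simp only [smul_mul_assoc, mul_smul_comm, smul_smul, smul_sub]
    match_scalars <;> ring

theorem adSigma_iterate_succ (m : ℕ) :
    (adSigma q i)^[m + 1] (ι k j) =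
      ι k i * (adSigma q i)^[m] (ι k j) -
        (q i i ^ m * q i j) • ((adSigma q i)^[m] (ι k j) * ι k i) := by
  rw [Function.iterate_succ_apply', adSigma, gAct_adSigma_iterate, smul_mul_assoc]

theorem constTerm_adSigma_iterate (m : ℕ) : constTerm k n ((adSigma q i)^[m] (ι k j)) = 0 := by
  cases m with
  | zero => exact constTerm_ι j
  | succ m => simp [adSigma_iterate_succ, constTerm_ι]

def adCoeff (m : ℕ) : k :=
  ∏ l ∈ Finset.range m, ((q j i)⁻¹ - q i i ^ l * q i j)

theorem Dop_adSigma_iterate (hq : ∀ a b, q a b ≠ 0) (hij : i ≠ j) (a : Fin n) (m : ℕ) :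
    Dop q a ((adSigma q i)^[m] (ι k j)) = if a = j then adCoeff q i j m • ι k i ^ m else 0 := by
  induction m with
  | zero => simp [Dop_ι, adCoeff]
  | succ m ih =>
    rw [adSigma_iterate_succ, map_sub, Dop_ι_mul, map_smul, Dop_mul, ih, Dop_ι,
      gAct_adSigma_iterate]
    rcases eq_or_ne a i with rfl | hai
    · have hc : q a a ^ m * q a j * ((q a a ^ m)⁻¹ * (q a j)⁻¹) = 1 := by
        rw [← mul_inv]
        exact mul_inv_cancel₀ (mul_ne_zero (pow_ne_zero _ (hq a a)) (hq a j))
      simp [hij, smul_smul, hc]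
    · rcases eq_or_ne a j with rfl | haj
      · simp only [if_neg hai, ↓reduceIte, mul_zero, add_zero, zero_add]
        rw [mul_smul_comm, smul_mul_assoc, ← pow_succ', ← pow_succ, smul_smul, smul_smul,
          ← sub_smul, adCoeff, adCoeff, Finset.prod_range_succ]
        ring_nf
      · simp [hai, haj]

theorem adSigma_iterate_mem_nicholsKer (hq : ∀ a b, q a b ≠ 0) (hij : i ≠ j) (m : ℕ)
    (h : adCoeff q i j m = 0 ∨ ι k i ^ m ∈ nicholsKer q) :
    (adSigma q i)^[m] (ι k j) ∈ nicholsKer q := by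
  refine mem_nicholsKer_iff_Dop.mpr ⟨constTerm_adSigma_iterate q i j m, fun a => ?_⟩
  rw [Dop_adSigma_iterate q i j hq hij]
  split_ifs
  · rcases h with h | h
    · rw [h, zero_smul]
      exact zero_mem _
    · exact Submodule.smul_mem _ _ h
  · exact zero_mem _

theorem constTerm_DopWord_adSigma_iterate (hq : ∀ a b, q a b ≠ 0) (hij : i ≠ j) (m : ℕ) :
    constTerm k n (DopWord q (List.replicate m i ++ [j]) ((adSigma q i)^[m] (ι k j))) =
      adCoeff q i j m * ∏ l ∈ Finset.range m, ∑ s ∈ Finset.range (l + 1), (q i i)⁻¹ ^ s := by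
  rw [DopWord_append_singleton, Dop_adSigma_iterate q i j hq hij, if_pos rfl, map_smul, map_smul,
    constTerm_DopWord_replicate_ι_pow, smul_eq_mul]

theorem mkAlgHom_adSigma_iterate_succ_eq_zero (hq : ∀ a b, q a b ≠ 0) (hij : i ≠ j) {m : ℕ}
    (hm : (∑ l ∈ Finset.range (m + 1), q i i ^ l) * (q i i ^ m * q i j * q j i - 1) = 0) :
    RingQuot.mkAlgHom k (nicholsRel q) ((adSigma q i)^[m + 1] (ι k j)) = 0 := by
  rw [mkAlgHom_nicholsRel_eq_zero_iff]
  refine adSigma_iterate_mem_nicholsKer q i j hq hij _ ?_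
  rcases (geom_sum_mul_sub_one_eq_zero_iff (hq i i) (hq j i) m).mp hm with hsum | hfac
  · exact .inr (ι_pow_succ_mem_nicholsKer q i m hsum)
  · exact .inl (by rw [adCoeff, Finset.prod_range_succ, hfac, mul_zero])

theorem mkAlgHom_adSigma_iterate_ne_zero (hq : ∀ a b, q a b ≠ 0) (hij : i ≠ j) {m : ℕ}
    (hm : ∀ l < m, (∑ s ∈ Finset.range (l + 1), q i i ^ s) * (q i i ^ l * q i j * q j i - 1) ≠ 0) :
    RingQuot.mkAlgHom k (nicholsRel q) ((adSigma q i)^[m] (ι k j)) ≠ 0 := by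
  rw [Ne, mkAlgHom_nicholsRel_eq_zero_iff, mem_nicholsKer]
  intro h
  have hw := h (List.replicate m i ++ [j])
  rw [constTerm_DopWord_adSigma_iterate q i j hq hij] at hw
  have hcond (l : ℕ) (hl : l ∈ Finset.range m) :=
    mt (geom_sum_mul_sub_one_eq_zero_iff (hq i i) (hq j i) l).mpr (hm l (Finset.mem_range.mp hl))
  refine mul_ne_zero ?_ ?_ hw
  · exact Finset.prod_ne_zero_iff.mpr fun l hl hfac => hcond l hl (.inr hfac)
  · exact Finset.prod_ne_zero_iff.mpr fun l hl hsum => hcond l hl (.inl hsum)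

end AdjointIterates

theorem stmt16_general {k : Type*} [Field k] {n : ℕ}
    (q : Fin n → Fin n → k) (hq : ∀ i j, q i j ≠ 0)
    (i j : Fin n) (hij : i ≠ j)
    (h : ∃ m : ℕ,
      (∑ l ∈ Finset.range (m + 1), q i i ^ l) * (q i i ^ m * q i j * q j i - 1) = 0) :
    RingQuot.mkAlgHom k (nicholsRel q)
        ((adSigma q i)^[sInf {m : ℕ | (∑ l ∈ Finset.range (m + 1), q i i ^ l) * (q i i ^ m * q i j * q j i - 1) = 0} + 1] (FreeAlgebra.ι k j)) = 0 ∧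
    RingQuot.mkAlgHom k (nicholsRel q)
        ((adSigma q i)^[sInf {m : ℕ | (∑ l ∈ Finset.range (m + 1), q i i ^ l) * (q i i ^ m * q i j * q j i - 1) = 0}] (FreeAlgebra.ι k j)) ≠ 0 :=
  ⟨mkAlgHom_adSigma_iterate_succ_eq_zero q i j hq hij (Nat.sInf_mem h),
    mkAlgHom_adSigma_iterate_ne_zero q i j hq hij fun _ hl => Nat.notMem_of_lt_sInf hl⟩

/-- In the Nichols algebra `B(V)` of a diagonal braiding, with
`m_{ij} = min { m : [m+1]_{q_{ii}} (q_{ii}^m q_{ij} q_{ji} - 1) = 0 }` (assumed to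
exist), one has `(ad_σ xᵢ)^{m_{ij}+1}(x_j) = 0` while
`(ad_σ xᵢ)^{m_{ij}}(x_j) ≠ 0`. -/
theorem stmt16 {k : Type*} [Field k] [CharZero k] {n : ℕ}
    (q : Fin n → Fin n → k) (hq : ∀ i j, q i j ≠ 0)
    (i j : Fin n) (hij : i ≠ j)
    (h : ∃ m : ℕ,
      (∑ l ∈ Finset.range (m + 1), q i i ^ l) * (q i i ^ m * q i j * q j i - 1) = 0) :
    RingQuot.mkAlgHom k (nicholsRel q)
        ((adSigma q i)^[sInf {m : ℕ | (∑ l ∈ Finset.range (m + 1), q i i ^ l) * (q i i ^ m * q i j * q j i - 1) = 0} + 1] (FreeAlgebra.ι k j)) = 0 ∧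
    RingQuot.mkAlgHom k (nicholsRel q)
        ((adSigma q i)^[sInf {m : ℕ | (∑ l ∈ Finset.range (m + 1), q i i ^ l) * (q i i ^ m * q i j * q j i - 1) = 0}] (FreeAlgebra.ι k j)) ≠ 0 :=
  stmt16_general q hq i j hij h

end
end

section
/- Let s_i : ℤⁿ → ℤⁿ (i = 1,...,n) be the pseudo-reflections of a generalized Cartan matrix C, s_i(e_i) = −e_i, s_i(e_j) = e_j − a_{ij} e_i for j ≠ i, and suppose C is symmetrizable. If the group generated by s_1,...,s_n in GL_n(ℤ) is finite, then C is of finite type. -/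
section Aux

open Matrix

set_option linter.unnecessarySeqFocus false

lemma cartanRefl_mul_self {n : ℕ} (a : Fin n → Fin n → ℤ) (hdiag : ∀ i, a i i = 2)
    (i : Fin n) : cartanRefl a i * cartanRefl a i = 1 := by
  ext l j
  simp only [cartanRefl, Matrix.mul_apply, Matrix.of_apply, Matrix.one_apply, sub_mul, mul_sub,
    ite_mul, mul_ite, one_mul, mul_one, zero_mul, mul_zero, zero_sub, sub_zero,
    Finset.sum_sub_distrib, Finset.sum_ite_eq, Finset.sum_ite_eq', Finset.mem_univ, if_true]
  split_ifs with h1 h2 h3 <;> simp_all [hdiag] <;> ring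

/-- The simple reflection as an element of `GL_n(ℤ)`. -/
def reflUnit {n : ℕ} (a : Fin n → Fin n → ℤ) (hdiag : ∀ i, a i i = 2) (i : Fin n) :
    Matrix.GeneralLinearGroup (Fin n) ℤ :=
  ⟨cartanRefl a i, cartanRefl a i, cartanRefl_mul_self a hdiag i, cartanRefl_mul_self a hdiag i⟩

/-- A group element of `GL_n(ℤ)` as a real matrix. -/
noncomputable def MR {n : ℕ} (g : Matrix.GeneralLinearGroup (Fin n) ℤ) :
    Matrix (Fin n) (Fin n) ℝ :=
  (g : Matrix (Fin n) (Fin n) ℤ).map ⇑(Int.castRingHom ℝ)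

lemma MR_mul {n : ℕ} (g h : Matrix.GeneralLinearGroup (Fin n) ℤ) :
    MR (g * h) = MR g * MR h := by
  unfold MR
  rw [Units.val_mul, Matrix.map_mul]

lemma MR_one {n : ℕ} : MR (1 : Matrix.GeneralLinearGroup (Fin n) ℤ) = 1 := by
  unfold MR
  rw [Units.val_one, Matrix.map_one] <;> simp

/-- The Gram matrix of the averaged bilinear form. -/
noncomputable def QM {n : ℕ} (S : Finset (Matrix.GeneralLinearGroup (Fin n) ℤ)) :
    Matrix (Fin n) (Fin n) ℝ :=
  ∑ g ∈ S, (MR g)ᵀ * MR g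

/-- The averaged bilinear form. -/
noncomputable def PB {n : ℕ} (S : Finset (Matrix.GeneralLinearGroup (Fin n) ℤ))
    (x y : Fin n → ℝ) : ℝ :=
  x ⬝ᵥ (QM S).mulVec y

lemma PB_sum {n : ℕ} (S : Finset (Matrix.GeneralLinearGroup (Fin n) ℤ)) (x y : Fin n → ℝ) :
    PB S x y = ∑ g ∈ S, (MR g).mulVec x ⬝ᵥ (MR g).mulVec y := by
  have h1 : (QM S).mulVec y = ∑ g ∈ S, ((MR g)ᵀ * MR g).mulVec y := by
    funext k
    simp only [QM, Matrix.mulVec, dotProduct, Matrix.sum_apply, Finset.sum_mul,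
      Finset.sum_apply]
    exact Finset.sum_comm
  rw [PB, h1]
  have h2 : x ⬝ᵥ (∑ g ∈ S, ((MR g)ᵀ * MR g).mulVec y)
      = ∑ g ∈ S, x ⬝ᵥ ((MR g)ᵀ * MR g).mulVec y := by
    simp only [dotProduct, Finset.sum_apply, Finset.mul_sum]
    exact Finset.sum_comm
  rw [h2]
  refine Finset.sum_congr rfl fun g _ => ?_
  rw [← Matrix.mulVec_mulVec, Matrix.dotProduct_mulVec, Matrix.vecMul_transpose]

lemma PB_expand {n : ℕ} (S : Finset (Matrix.GeneralLinearGroup (Fin n) ℤ)) (x y : Fin n → ℝ) :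
    PB S x y = ∑ i, ∑ j, x i * y j * QM S i j := by
  simp only [PB, Matrix.mulVec, dotProduct, Finset.mul_sum]
  exact Finset.sum_congr rfl fun i _ => Finset.sum_congr rfl fun j _ => by ring

lemma QM_symm {n : ℕ} (S : Finset (Matrix.GeneralLinearGroup (Fin n) ℤ)) (i j : Fin n) :
    QM S i j = QM S j i := by
  simp only [QM, Matrix.sum_apply, Matrix.mul_apply, Matrix.transpose_apply]
  exact Finset.sum_congr rfl fun g _ => Finset.sum_congr rfl fun k _ => mul_comm _ _

lemma PB_single {n : ℕ} (S : Finset (Matrix.GeneralLinearGroup (Fin n) ℤ)) (i j : Fin n) :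
    PB S (Pi.single i 1) (Pi.single j 1) = QM S i j := by
  simp [PB, Matrix.mulVec_single, single_dotProduct]

lemma MR_refl_mulVec {n : ℕ} (a : Fin n → Fin n → ℤ) (i : Fin n)
    (g : Matrix.GeneralLinearGroup (Fin n) ℤ)
    (hg : (g : Matrix (Fin n) (Fin n) ℤ) = cartanRefl a i) (x : Fin n → ℝ) :
    (MR g).mulVec x = x - (∑ j, (a i j : ℝ) * x j) • (Pi.single i 1 : Fin n → ℝ) := by
  funext l
  simp only [MR, hg, cartanRefl, Matrix.mulVec, dotProduct, Matrix.map_apply,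
    Matrix.of_apply, Pi.sub_apply, Pi.smul_apply, Pi.single_apply, smul_eq_mul,
    Int.cast_sub, Int.cast_ite, Int.cast_one, Int.cast_zero, sub_mul, ite_mul, one_mul, zero_mul,
    Finset.sum_sub_distrib, Finset.sum_ite_eq, Finset.mem_univ, if_true]
  split_ifs with h <;> simp [h] <;> ring_nf <;> simp [Finset.mul_sum, mul_comm]

end Aux

/-- If the group generated by the pseudo-reflections of a symmetrizable generalized
Cartan matrix in `GL_n(ℤ)` is finite, then the matrix is of finite type. -/
theorem stmt18 {n : ℕ} (a : Fin n → Fin n → ℤ)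
    (hdiag : ∀ i, a i i = 2)
    (hoff : ∀ i j, i ≠ j → a i j ≤ 0)
    (hzero : ∀ i j, a i j = 0 ↔ a j i = 0)
    (d : Fin n → ℚ) (hdpos : ∀ i, 0 < d i)
    (hsym : ∀ i j, d i * a i j = d j * a j i)
    (hfin : Set.Finite (weylGroup a : Set (Matrix.GeneralLinearGroup (Fin n) ℤ))) :
    ∀ v : Fin n → ℚ, v ≠ 0 → 0 < ∑ i, ∑ j, d i * (a i j : ℚ) * v i * v j := by
  classical
  intro v hv
  set S : Finset (Matrix.GeneralLinearGroup (Fin n) ℤ) := hfin.toFinset with hSdef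
  have hmemS : ∀ g, g ∈ S ↔ g ∈ weylGroup a := fun g => hfin.mem_toFinset
  have hrefl_mem : ∀ i, reflUnit a hdiag i ∈ weylGroup a := fun i =>
    Subgroup.subset_closure ⟨i, rfl⟩
  have hsi : ∀ (i : Fin n) (x : Fin n → ℝ),
      (MR (reflUnit a hdiag i)).mulVec x
        = x - (∑ j, (a i j : ℝ) * x j) • (Pi.single i 1 : Fin n → ℝ) :=
    fun i x => MR_refl_mulVec a i _ rfl x
  -- invariance of the averaged form under the reflections
  have hinv : ∀ (i : Fin n) (x y : Fin n → ℝ),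
      PB S ((MR (reflUnit a hdiag i)).mulVec x) ((MR (reflUnit a hdiag i)).mulVec y)
        = PB S x y := by
    intro i x y
    rw [PB_sum, PB_sum]
    refine Finset.sum_bij' (fun g _ => g * reflUnit a hdiag i)
      (fun g _ => g * (reflUnit a hdiag i)⁻¹) ?_ ?_ ?_ ?_ ?_
    · intro g hg
      rw [hmemS] at *
      exact mul_mem hg (hrefl_mem i)
    · intro g hg
      rw [hmemS] at *
      exact mul_mem hg (inv_mem (hrefl_mem i))
    · intro g hg
      simp [mul_assoc]
    · intro g hg
      simp [mul_assoc]
    · intro g hg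
      rw [Matrix.mulVec_mulVec, Matrix.mulVec_mulVec, ← MR_mul]
  -- the reflection sends `e i` to `-(e i)`
  have hsie : ∀ i : Fin n,
      (MR (reflUnit a hdiag i)).mulVec (Pi.single i 1 : Fin n → ℝ)
        = -(Pi.single i 1 : Fin n → ℝ) := by
    intro i
    rw [hsi]
    have h2 : (∑ j, (a i j : ℝ) * (Pi.single i 1 : Fin n → ℝ) j) = 2 := by
      simp [Pi.single_apply, hdiag i]
    rw [h2]
    funext l
    simp only [Pi.sub_apply, Pi.smul_apply, Pi.neg_apply, Pi.single_apply, smul_eq_mul]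
    split_ifs <;> ring
  -- key identity
  have hkey : ∀ (i : Fin n) (x : Fin n → ℝ),
      2 * PB S x (Pi.single i 1) = (∑ j, (a i j : ℝ) * x j) * QM S i i := by
    intro i x
    have h1 := hinv i x (Pi.single i 1)
    rw [hsie, hsi] at h1
    have h2 : PB S (x - (∑ j, (a i j : ℝ) * x j) • (Pi.single i 1 : Fin n → ℝ))
        (-(Pi.single i 1 : Fin n → ℝ))
        = -(PB S x (Pi.single i 1))
          + (∑ j, (a i j : ℝ) * x j) * PB S (Pi.single i 1) (Pi.single i 1) := by
      simp only [PB, Matrix.mulVec_neg, dotProduct_neg, sub_dotProduct,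
        smul_dotProduct, smul_eq_mul]
      ring
    rw [h2, PB_single] at h1
    linarith
  -- positivity of the averaged form
  have h1S : (1 : Matrix.GeneralLinearGroup (Fin n) ℤ) ∈ S := (hmemS 1).2 (one_mem _)
  have hPpos : ∀ x : Fin n → ℝ, (∃ i, x i ≠ 0) → 0 < PB S x x := by
    rintro x ⟨i0, hi0⟩
    rw [PB_sum]
    refine Finset.sum_pos' (fun g _ => ?_) ⟨1, h1S, ?_⟩
    · exact Finset.sum_nonneg fun k _ => mul_self_nonneg _
    · rw [MR_one, Matrix.one_mulVec]
      exact Finset.sum_pos' (fun k _ => mul_self_nonneg _)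
        ⟨i0, Finset.mem_univ _, mul_self_pos.2 hi0⟩
  set p : Fin n → ℝ := fun i => QM S i i with hpdef
  have hppos : ∀ i, 0 < p i := by
    intro i
    have h := hPpos (Pi.single i 1) ⟨i, by simp⟩
    rwa [PB_single] at h
  have hQa : ∀ i j, 2 * QM S j i = (a i j : ℝ) * p i := by
    intro i j
    have h := hkey i (Pi.single j 1)
    rw [PB_single] at h
    simpa [Pi.single_apply, mul_ite] using h
  have hap : ∀ i j, (a i j : ℝ) * p i = (a j i : ℝ) * p j := by
    intro i j
    rw [← hQa, ← hQa, QM_symm]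
  set c : Fin n → ℝ := fun i => 2 * (d i : ℝ) / p i with hcdef
  have hcpos : ∀ i, 0 < c i := by
    intro i
    have : (0 : ℝ) < (d i : ℝ) := by exact_mod_cast hdpos i
    exact div_pos (by linarith) (hppos i)
  have hceq : ∀ i j, a i j ≠ 0 → c i = c j := by
    intro i j hne
    have hne2 : a j i ≠ 0 := fun h => hne ((hzero i j).2 h)
    have hdde : (d i : ℝ) * (a i j : ℝ) = (d j : ℝ) * (a j i : ℝ) := by
      exact_mod_cast hsym i j
    have h3 : (d i : ℝ) * p j * (a i j : ℝ) = (d j : ℝ) * p i * (a i j : ℝ) := by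
      calc (d i : ℝ) * p j * (a i j : ℝ) = ((d i : ℝ) * (a i j : ℝ)) * p j := by ring
        _ = ((d j : ℝ) * (a j i : ℝ)) * p j := by rw [hdde]
        _ = (d j : ℝ) * ((a j i : ℝ) * p j) := by ring
        _ = (d j : ℝ) * ((a i j : ℝ) * p i) := by rw [← hap]
        _ = (d j : ℝ) * p i * (a i j : ℝ) := by ring
    have haR : ((a i j : ℤ) : ℝ) ≠ 0 := by exact_mod_cast hne
    have h4 : (d i : ℝ) * p j = (d j : ℝ) * p i := mul_right_cancel₀ haR h3
    show 2 * (d i : ℝ) / p i = 2 * (d j : ℝ) / p j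
    rw [div_eq_div_iff (hppos i).ne' (hppos j).ne']
    linarith
  -- the rescaled vector
  set u : Fin n → ℝ := fun i => Real.sqrt (c i) * (v i : ℝ) with hudef
  obtain ⟨i0, hi0⟩ := Function.ne_iff.1 hv
  have hvi0 : ((v i0 : ℚ) : ℝ) ≠ 0 := by exact_mod_cast hi0
  have hu0 : u i0 ≠ 0 := mul_ne_zero (ne_of_gt (Real.sqrt_pos.2 (hcpos i0))) hvi0
  have hterm : ∀ i j, (d i : ℝ) * (a i j : ℝ) * (v i : ℝ) * (v j : ℝ)
      = u i * u j * QM S i j := by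
    intro i j
    by_cases hij : a i j = 0
    · have hq : QM S i j = 0 := by
        rw [QM_symm]
        have h := hQa i j
        rw [hij] at h
        push_cast at h
        linarith
      rw [hq, hij]
      push_cast
      ring
    · have hcc := hceq i j hij
      have hsq : Real.sqrt (c i) * Real.sqrt (c j) = c i := by
        rw [← hcc]
        exact Real.mul_self_sqrt (le_of_lt (hcpos i))
      have hQij : QM S i j = (a i j : ℝ) * p i / 2 := by
        rw [QM_symm]
        have h := hQa i j
        linarith
      have huu : u i * u j = c i * ((v i : ℝ) * (v j : ℝ)) := by
        show Real.sqrt (c i) * (v i : ℝ) * (Real.sqrt (c j) * (v j : ℝ))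
            = c i * ((v i : ℝ) * (v j : ℝ))
        rw [show Real.sqrt (c i) * (v i : ℝ) * (Real.sqrt (c j) * (v j : ℝ))
            = (Real.sqrt (c i) * Real.sqrt (c j)) * ((v i : ℝ) * (v j : ℝ)) by ring, hsq]
      rw [hQij, huu]
      show (d i : ℝ) * (a i j : ℝ) * (v i : ℝ) * (v j : ℝ)
          = 2 * (d i : ℝ) / p i * ((v i : ℝ) * (v j : ℝ)) * ((a i j : ℝ) * p i / 2)
      rw [show 2 * (d i : ℝ) / p i * ((v i : ℝ) * (v j : ℝ)) * ((a i j : ℝ) * p i / 2)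
          = (d i : ℝ) * (a i j : ℝ) * (v i : ℝ) * (v j : ℝ) * (p i / p i) by ring,
        div_self (hppos i).ne', mul_one]
  -- conclude
  rw [← Rat.cast_pos (K := ℝ)]
  push_cast
  have hfinal : (∑ i, ∑ j, (d i : ℝ) * (a i j : ℝ) * (v i : ℝ) * (v j : ℝ)) = PB S u u := by
    rw [PB_expand]
    exact Finset.sum_congr rfl fun i _ => Finset.sum_congr rfl fun j _ => hterm i j
  rw [hfinal]
  exact hPpos u ⟨i0, hu0⟩
end
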